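/- arXiv:2104.12761 — 7 statements merged into one kernel-verified Lean document; each statement's English description precedes it below -/
import Mathlib

section
/- Suppose a single player runs OptDA with a regularizer h on X and the adaptive learning rate. Let Ω be a nonempty set (the possible action profiles of the opponents), let ℓ : E × Ω → ℝ be such that for every a ∈ Ω the function x ↦ ℓ(x,a) is convex on X, let (a_t)_{t≥1} be an arbitrary sequence in Ω, and suppose that for every t ≥ 1 the feedback g_t is a subgradient of ℓ(·, a_t) at X_{t+1/2} relative to X (i.e. ℓ(p, a_t) ≥ ℓ(X_{t+1/2}, a_t) + ⟨g_t, p − X_{t+1/2}⟩ for all p ∈ X) and that ‖g_t‖ ≤ M for some constant M ≥ 0. Then for every T ≥ 1 and every p ∈ X: Σ_{t=1}^{T} (ℓ(X_{t+1/2}, a_t) − ℓ(p, a_t)) ≤ (1 + h(p) − h(X_1)) · √(1 + 4M²T) + 2M². In particular, for every bounded set C ⊆ X the regret max_{p∈C} Σ_{t=1}^{T} (ℓ(X_{t+1/2}, a_t) − ℓ(p, a_t)) is O(M√T + M²). -/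
/-!
The regret is at most the linearized regret `∑ ⟪g t, W t - p⟫`. The first-order optimality
conditions of `Z t` and `W t`, both tested at `Z (t + 1)`, combined with the strong convexity of `h`
and Young's inequality, bound `⟪g t, W t - p⟫` by the decrease of the dual-averaging gap
`⟪∑_{s<t} g s, p - Z t⟫ + η t * (h p - h (Z t))`, plus `(η (t + 1) - η t) * (h p - h (Z 1))`,
plus `‖g t - g (t - 1)‖² / (2 η t)`. Summing, the gaps telescope. For the adaptive rate
`η (t + 1)² = η t² + ‖g t - g (t - 1)‖²`, so the last term is at most
`η (t + 1) - η t + 2 M² (1 / η t - 1 / η (t + 1))`, which telescopes as well.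
-/

open scoped RealInnerProductSpace
open Filter Finset Topology

noncomputable section

/-- Bregman divergence of a regularizer `h` with gradient map `Gh`. -/
def breg {F : Type*} [NormedAddCommGroup F] [InnerProductSpace ℝ F]
    (h : F → ℝ) (Gh : F → F) (p x : F) : ℝ :=
  h p - h x - ⟪Gh x, p - x⟫

/-- `h` is a regularizer on `X`: a convex differentiable function with gradient map `Gh`
that is `1`-strongly convex on `X`. -/
structure IsRegularizer {F : Type*} [NormedAddCommGroup F] [InnerProductSpace ℝ F]
    (X : Set F) (h : F → ℝ) (Gh : F → F) : Prop where
  convex : ConvexOn ℝ Set.univ h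
  grad : ∀ x : F, HasFDerivAt h (innerSL ℝ (Gh x)) x
  strong : StrongConvexOn X 1 h

/-- The adaptive learning rate `η_t = √(1 + ∑_{s=1}^{t-1} ‖g_s - g_{s-1}‖²)`. -/
def adaEta {F : Type*} [NormedAddCommGroup F] [InnerProductSpace ℝ F]
    (g : ℕ → F) (t : ℕ) : ℝ :=
  Real.sqrt (1 + ∑ s ∈ Finset.Ico 1 t, ‖g s - g (s - 1)‖ ^ 2)

/-- OptDA iterates: `Z t` is the base state `X_t` and `W t` is the played action `X_{t+1/2}`,
for feedback `g` (with `g 0 = 0`) and positive nondecreasing learning rates `η`. -/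
structure IsOptDA {F : Type*} [NormedAddCommGroup F] [InnerProductSpace ℝ F]
    (X : Set F) (h : F → ℝ) (Gh : F → F)
    (η : ℕ → ℝ) (g : ℕ → F) (Z W : ℕ → F) : Prop where
  g_zero : g 0 = 0
  eta_pos : ∀ t : ℕ, 1 ≤ t → 0 < η t
  eta_mono : ∀ t : ℕ, 1 ≤ t → η t ≤ η (t + 1)
  base_mem : ∀ t : ℕ, 1 ≤ t → Z t ∈ X
  lead_mem : ∀ t : ℕ, 1 ≤ t → W t ∈ X
  base_min : ∀ t : ℕ, 1 ≤ t → ∀ p ∈ X,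
    ⟪∑ s ∈ Finset.Ico 1 t, g s, Z t⟫ + η t * h (Z t)
      ≤ ⟪∑ s ∈ Finset.Ico 1 t, g s, p⟫ + η t * h p
  lead_min : ∀ t : ℕ, 1 ≤ t → ∀ p ∈ X,
    ⟪g (t - 1), W t⟫ + η t * breg h Gh (W t) (Z t)
      ≤ ⟪g (t - 1), p⟫ + η t * breg h Gh p (Z t)

theorem Finset.sum_Icc_one_sub_succ {M : Type*} [AddCommGroup M] (f : ℕ → M) (T : ℕ) :
    ∑ t ∈ Icc 1 T, (f t - f (t + 1)) = f 1 - f (T + 1) := by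
  rw [← Ico_add_one_right_eq_Icc, ← neg_sub, ← sum_Ico_sub f (Nat.le_add_left 1 T),
    ← sum_neg_distrib]
  simp only [neg_sub]

theorem ConvexOn.le_sub_of_hasFDerivAt {E : Type*} [NormedAddCommGroup E] [NormedSpace ℝ E]
    {s : Set E} {f : E → ℝ} {f' : E →L[ℝ] ℝ} {x y : E} (hf : ConvexOn ℝ s f)
    (hx : x ∈ s) (hy : y ∈ s) (hf' : HasFDerivAt f f' x) : f' (y - x) ≤ f y - f x := by
  have hline : ConvexOn ℝ (Set.Icc (0 : ℝ) 1) (f ∘ AffineMap.lineMap x y) :=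
    (hf.comp_affineMap _).subset (fun _ ht => hf.1.lineMap_mem hx hy ht) (convex_Icc 0 1)
  have hderiv : HasDerivAt (f ∘ AffineMap.lineMap x y) (f' (y - x)) (0 : ℝ) := by
    refine HasFDerivAt.comp_hasDerivAt _ ?_ AffineMap.hasDerivAt_lineMap
    simpa using hf'
  simpa [slope] using hline.le_slope_of_hasDerivAt (by simp) (by simp) zero_lt_one hderiv

theorem real_inner_le_norm_sq_div_add {F : Type*} [NormedAddCommGroup F] [InnerProductSpace ℝ F]
    {u v : F} {c : ℝ} (hc : 0 < c) : ⟪u, v⟫ ≤ ‖u‖ ^ 2 / (2 * c) + c / 2 * ‖v‖ ^ 2 := by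
  have h0 : 0 ≤ ‖u - c • v‖ ^ 2 := sq_nonneg _
  rw [norm_sub_sq_real, norm_smul, real_inner_smul_right, Real.norm_of_nonneg hc.le] at h0
  rw [div_add' _ _ _ (by positivity), le_div_iff₀ (by positivity)]
  nlinarith

section Regularizer

variable {F : Type*} [NormedAddCommGroup F] [InnerProductSpace ℝ F]

theorem IsMinOn.inner_sub_nonneg {X : Set F} {f : F → ℝ} {G x q : F} (hX : Convex ℝ X)
    (hmin : IsMinOn f X x) (hf : HasFDerivAt f (innerSL ℝ G) x) (hx : x ∈ X) (hq : q ∈ X) :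
    0 ≤ ⟪G, q - x⟫ :=
  hmin.localize.hasFDerivWithinAt_nonneg hf.hasFDerivWithinAt
    (sub_mem_posTangentConeAt_of_segment_subset (hX.segment_subset hx hq))

theorem IsMinOn.inner_add_smul_sub_nonneg {X : Set F} {f : F → ℝ} {v G x q : F} {c : ℝ}
    (hX : Convex ℝ X) (hmin : IsMinOn (fun p => ⟪v, p⟫ + c * f p) X x)
    (hf : HasFDerivAt f (innerSL ℝ G) x) (hx : x ∈ X) (hq : q ∈ X) :
    0 ≤ ⟪v + c • G, q - x⟫ := by
  refine hmin.inner_sub_nonneg hX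
    (((innerSL ℝ v).hasFDerivAt.add (hf.const_mul c)).congr_fderiv ?_) hx hq
  ext y
  simp

theorem hasFDerivAt_breg_left {h : F → ℝ} {Gh : F → F}
    (hgrad : ∀ x, HasFDerivAt h (innerSL ℝ (Gh x)) x) (w z : F) :
    HasFDerivAt (fun p => breg h Gh p z) (innerSL ℝ (Gh w - Gh z)) w := by
  refine (((hgrad w).sub_const (h z)).sub
    ((innerSL ℝ (Gh z)).hasFDerivAt.comp w ((hasFDerivAt_id w).sub_const z))).congr_fderiv ?_
  ext y
  simp

theorem StrongConvexOn.mul_half_sq_norm_le_breg {X : Set F} {m : ℝ} {h : F → ℝ} {Gh : F → F}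
    {x q : F} (hh : StrongConvexOn X m h) (hgrad : HasFDerivAt h (innerSL ℝ (Gh x)) x)
    (hx : x ∈ X) (hq : q ∈ X) : m / 2 * ‖q - x‖ ^ 2 ≤ breg h Gh q x := by
  have key := (strongConvexOn_iff_convex.1 hh).le_sub_of_hasFDerivAt hx hq
    (hgrad.sub ((hasStrictFDerivAt_norm_sq x).hasFDerivAt.const_mul (m / 2)))
  rw [breg, norm_sub_sq_real]
  simp only [_root_.sub_apply, _root_.smul_apply, innerSL_apply_apply, smul_eq_mul,
    Nat.cast_ofNat, nsmul_eq_mul, inner_sub_right, real_inner_self_eq_norm_sq,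
    real_inner_comm x q] at key ⊢
  linarith

end Regularizer

section AdaptiveRate

theorem sq_sub_sq_div_two_le {e e' B : ℝ} (he : 0 < e) (hee' : e ≤ e')
    (hB : e' ^ 2 - e ^ 2 ≤ B) :
    (e' ^ 2 - e ^ 2) / (2 * e) ≤ e' - e + B / 2 * (1 / e - 1 / e') := by
  have he' : 0 < e' := he.trans_le hee'
  have hfirst : (e' ^ 2 - e ^ 2) / (2 * e') ≤ e' - e := by
    rw [div_le_iff₀ (by positivity)]
    nlinarith
  have hsecond : (e' ^ 2 - e ^ 2) / 2 * (1 / e - 1 / e') ≤ B / 2 * (1 / e - 1 / e') :=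
    mul_le_mul_of_nonneg_right (by linarith) (sub_nonneg.2 (one_div_le_one_div_of_le he hee'))
  have hsplit : (e' ^ 2 - e ^ 2) / (2 * e)
      = (e' ^ 2 - e ^ 2) / (2 * e') + (e' ^ 2 - e ^ 2) / 2 * (1 / e - 1 / e') := by
    field_simp
    ring
  linarith

variable {a : ℕ → ℝ} {B : ℝ}

theorem sum_div_two_sqrt_one_add_sum_le (ha : ∀ t, 0 ≤ a t) (haB : ∀ t, 1 ≤ t → a t ≤ B)
    (T : ℕ) :
    ∑ t ∈ Icc 1 T, a t / (2 * √(1 + ∑ s ∈ Ico 1 t, a s))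
      ≤ √(1 + ∑ s ∈ Ico 1 (T + 1), a s) - 1 + B / 2 := by
  set e : ℕ → ℝ := fun t => √(1 + ∑ s ∈ Ico 1 t, a s) with he_def
  have hsum_nonneg : ∀ t, 0 ≤ ∑ s ∈ Ico 1 t, a s := fun t => sum_nonneg fun s _ => ha s
  have he_one : ∀ t, 1 ≤ e t := fun t => Real.one_le_sqrt.2 (by linarith [hsum_nonneg t])
  have he_sq : ∀ t, 1 ≤ t → e (t + 1) ^ 2 - e t ^ 2 = a t := by
    intro t ht
    rw [he_def, Real.sq_sqrt (by linarith [hsum_nonneg (t + 1)]),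
      Real.sq_sqrt (by linarith [hsum_nonneg t]), sum_Ico_succ_top ht]
    ring
  have hstep : ∀ t ∈ Icc 1 T, a t / (2 * e t)
      ≤ (B / 2 * (1 / e t) - e t) - (B / 2 * (1 / e (t + 1)) - e (t + 1)) := by
    intro t ht
    have ht1 := (mem_Icc.1 ht).1
    have hmono : e t ≤ e (t + 1) := by nlinarith [he_sq t ht1, ha t, he_one t, he_one (t + 1)]
    have := sq_sub_sq_div_two_le (B := B) (by linarith [he_one t]) hmono
      ((he_sq t ht1).trans_le (haB t ht1))
    rw [he_sq t ht1] at this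
    linarith
  have hB : 0 ≤ B := (ha 1).trans (haB 1 le_rfl)
  have h1 : e 1 = 1 := by simp [he_def]
  have htele := (sum_le_sum hstep).trans_eq (sum_Icc_one_sub_succ _ T)
  rw [h1] at htele
  have : 0 ≤ B / 2 * (1 / e (T + 1)) := by have := he_one (T + 1); positivity
  linarith

theorem sqrt_one_add_sum_le (haB : ∀ t, 1 ≤ t → a t ≤ B) (T : ℕ) :
    √(1 + ∑ s ∈ Ico 1 (T + 1), a s) ≤ √(1 + B * T) := by
  gcongr
  simpa [mul_comm] using sum_le_card_nsmul (Ico 1 (T + 1)) a B fun s hs => haB s (mem_Ico.1 hs).1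

end AdaptiveRate

section OptDA

variable {F : Type*} [NormedAddCommGroup F] [InnerProductSpace ℝ F]

/-- The dual-averaging objective `p ↦ ⟪∑_{s<t} g s, p⟫ + η t * h p` at `p`, minus its value at
`Z t`. -/
def daGap (h : F → ℝ) (η : ℕ → ℝ) (g Z : ℕ → F) (p : F) (t : ℕ) : ℝ :=
  ⟪∑ s ∈ Ico 1 t, g s, p - Z t⟫ + η t * (h p - h (Z t))

namespace IsOptDA

variable {X : Set F} {h : F → ℝ} {Gh : F → F} {η : ℕ → ℝ} {g : ℕ → F} {Z W : ℕ → F}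

theorem daGap_nonneg (hrun : IsOptDA X h Gh η g Z W) {t : ℕ} (ht : 1 ≤ t) {p : F}
    (hp : p ∈ X) : 0 ≤ daGap h η g Z p t := by
  have := hrun.base_min t ht p hp
  rw [daGap, inner_sub_right]
  linarith

theorem base_one_le (hrun : IsOptDA X h Gh η g Z W) {p : F} (hp : p ∈ X) : h (Z 1) ≤ h p := by
  have h1 := hrun.base_min 1 le_rfl p hp
  simp only [Ico_self, sum_empty, inner_zero_left, zero_add] at h1
  exact le_of_mul_le_mul_left h1 (hrun.eta_pos 1 le_rfl)

theorem inner_lead_sub_le (hrun : IsOptDA X h Gh η g Z W) (hX : Convex ℝ X)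
    (hreg : IsRegularizer X h Gh) {t : ℕ} (ht : 1 ≤ t) :
    ⟪g t, W t - Z (t + 1)⟫ ≤ ⟪∑ s ∈ Ico 1 t, g s, Z (t + 1) - Z t⟫
      + η t * (h (Z (t + 1)) - h (Z t)) + ‖g t - g (t - 1)‖ ^ 2 / (2 * η t) := by
  have hZ := hrun.base_mem t ht
  have hZ' := hrun.base_mem (t + 1) (by omega)
  have hW := hrun.lead_mem t ht
  have hη := hrun.eta_pos t ht
  have base_vi := (isMinOn_iff.2 (hrun.base_min t ht)).inner_add_smul_sub_nonneg hX
    (hreg.grad (Z t)) hZ hZ'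
  have lead_vi := (isMinOn_iff.2 (hrun.lead_min t ht)).inner_add_smul_sub_nonneg hX
    (hasFDerivAt_breg_left hreg.grad (W t) (Z t)) hW hZ'
  have sc_lead := mul_le_mul_of_nonneg_left
    (hreg.strong.mul_half_sq_norm_le_breg (hreg.grad (W t)) hW hZ') hη.le
  have sc_base := mul_le_mul_of_nonneg_left
    (hreg.strong.mul_half_sq_norm_le_breg (hreg.grad (Z t)) hZ hW) hη.le
  have young := real_inner_le_norm_sq_div_add (u := g t - g (t - 1)) (v := W t - Z (t + 1)) hη
  rw [norm_sub_rev (W t)] at young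
  have hsq := mul_nonneg hη.le (sq_nonneg ‖W t - Z t‖)
  simp only [breg, inner_add_left, inner_sub_left, inner_sub_right, real_inner_smul_left]
    at base_vi lead_vi sc_lead sc_base young ⊢
  linarith

theorem inner_sub_le_daGap_sub (hrun : IsOptDA X h Gh η g Z W) (hX : Convex ℝ X)
    (hreg : IsRegularizer X h Gh) {t : ℕ} (ht : 1 ≤ t) (p : F) :
    ⟪g t, W t - p⟫ ≤ daGap h η g Z p t - daGap h η g Z p (t + 1)
      + (η (t + 1) - η t) * (h p - h (Z 1)) + ‖g t - g (t - 1)‖ ^ 2 / (2 * η t) := by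
  have hlead := hrun.inner_lead_sub_le hX hreg ht
  have hZ1 := mul_le_mul_of_nonneg_left (hrun.base_one_le (hrun.base_mem (t + 1) (by omega)))
    (sub_nonneg.2 (hrun.eta_mono t ht))
  rw [daGap, daGap, sum_Ico_succ_top ht]
  simp only [inner_add_left, inner_sub_right] at hlead ⊢
  linarith

theorem sum_inner_sub_le (hrun : IsOptDA X h Gh η g Z W) (hX : Convex ℝ X)
    (hreg : IsRegularizer X h Gh) {p : F} (hp : p ∈ X) (T : ℕ) :
    ∑ t ∈ Icc 1 T, ⟪g t, W t - p⟫
      ≤ η (T + 1) * (h p - h (Z 1)) + ∑ t ∈ Icc 1 T, ‖g t - g (t - 1)‖ ^ 2 / (2 * η t) := by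
  have hstep := sum_le_sum (s := Icc 1 T) fun t ht =>
    hrun.inner_sub_le_daGap_sub hX hreg (mem_Icc.1 ht).1 p
  have heta : ∑ t ∈ Icc 1 T, (η (t + 1) - η t) = η (T + 1) - η 1 := by
    rw [← Ico_add_one_right_eq_Icc]
    exact sum_Ico_sub η (Nat.le_add_left 1 T)
  rw [sum_add_distrib, sum_add_distrib, ← sum_mul, sum_Icc_one_sub_succ, heta] at hstep
  have hgap1 : daGap h η g Z p 1 = η 1 * (h p - h (Z 1)) := by simp [daGap]
  have := hrun.daGap_nonneg (Nat.le_add_left 1 T) hp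
  linarith

theorem norm_sub_prev_sq_le (hrun : IsOptDA X h Gh η g Z W) {M : ℝ} (hM : 0 ≤ M)
    (hgM : ∀ t : ℕ, 1 ≤ t → ‖g t‖ ≤ M) {t : ℕ} (ht : 1 ≤ t) :
    ‖g t - g (t - 1)‖ ^ 2 ≤ 4 * M ^ 2 := by
  have hprev : ‖g (t - 1)‖ ≤ M := by
    rcases Nat.lt_or_ge 1 t with h1 | h1
    · exact hgM _ (by omega)
    · rw [show t - 1 = 0 by omega, hrun.g_zero, norm_zero]
      exact hM
  calc ‖g t - g (t - 1)‖ ^ 2 ≤ (‖g t‖ + ‖g (t - 1)‖) ^ 2 := by gcongr; exact norm_sub_le _ _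
    _ ≤ (M + M) ^ 2 := by gcongr; exact hgM t ht
    _ = 4 * M ^ 2 := by ring

end IsOptDA

end OptDA

theorem optda_adversarial_regret_general
    {F : Type*} [NormedAddCommGroup F] [InnerProductSpace ℝ F]
    {Ω : Type*}
    (X : Set F) (hXcv : Convex ℝ X)
    (h : F → ℝ) (Gh : F → F) (hreg : IsRegularizer X h Gh)
    (L : F → Ω → ℝ)
    (a : ℕ → Ω) (g : ℕ → F) (Z W : ℕ → F)
    (hrun : IsOptDA X h Gh (adaEta g) g Z W)
    (hsub : ∀ t : ℕ, 1 ≤ t → ∀ p ∈ X, L (W t) (a t) + ⟪g t, p - W t⟫ ≤ L p (a t))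
    (M : ℝ) (hM : 0 ≤ M) (hgM : ∀ t : ℕ, 1 ≤ t → ‖g t‖ ≤ M) :
    ∀ T : ℕ, 1 ≤ T → ∀ p ∈ X,
      ∑ t ∈ Finset.Icc 1 T, (L (W t) (a t) - L p (a t))
        ≤ (1 + h p - h (Z 1)) * Real.sqrt (1 + 4 * M ^ 2 * T) + 2 * M ^ 2 := by
  intro T _ p hp
  have hlin : ∑ t ∈ Icc 1 T, (L (W t) (a t) - L p (a t)) ≤ ∑ t ∈ Icc 1 T, ⟪g t, W t - p⟫ :=
    sum_le_sum fun t ht => by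
      have := hsub t (mem_Icc.1 ht).1 p hp
      rw [← neg_sub (W t), inner_neg_right] at this
      linarith
  have hdiff := fun t => hrun.norm_sub_prev_sq_le hM hgM (t := t)
  have hopt := hrun.sum_inner_sub_le hXcv hreg hp T
  have hada := sum_div_two_sqrt_one_add_sum_le (fun t => sq_nonneg _) hdiff T
  have heta := sqrt_one_add_sum_le hdiff T
  unfold adaEta at hopt
  have hscale := mul_le_mul_of_nonneg_left heta
    (by linarith [hrun.base_one_le hp] : 0 ≤ 1 + h p - h (Z 1))
  linarith

/-- Theorem 1: adversarial regret bound for OptDA with the adaptive learning rate. -/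
theorem optda_adversarial_regret
    {F : Type*} [NormedAddCommGroup F] [InnerProductSpace ℝ F]
    {Ω : Type*} [Nonempty Ω]
    (X : Set F) (hXne : X.Nonempty) (hXcl : IsClosed X) (hXcv : Convex ℝ X)
    (h : F → ℝ) (Gh : F → F) (hreg : IsRegularizer X h Gh)
    (L : F → Ω → ℝ) (hLconv : ∀ a : Ω, ConvexOn ℝ X fun x => L x a)
    (a : ℕ → Ω) (g : ℕ → F) (Z W : ℕ → F)
    (hrun : IsOptDA X h Gh (adaEta g) g Z W)
    (hsub : ∀ t : ℕ, 1 ≤ t → ∀ p ∈ X, L (W t) (a t) + ⟪g t, p - W t⟫ ≤ L p (a t))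
    (M : ℝ) (hM : 0 ≤ M) (hgM : ∀ t : ℕ, 1 ≤ t → ‖g t‖ ≤ M) :
    ∀ T : ℕ, 1 ≤ T → ∀ p ∈ X,
      ∑ t ∈ Finset.Icc 1 T, (L (W t) (a t) - L p (a t))
        ≤ (1 + h p - h (Z 1)) * Real.sqrt (1 + 4 * M ^ 2 * T) + 2 * M ^ 2 :=
  optda_adversarial_regret_general X hXcv h Gh hreg L a g Z W hrun hsub M hM hgM
end
end

section
/- Let E be a real inner product space, X ⊆ E a nonempty closed convex set, and h : E → ℝ a convex function that is 1-strongly convex on X (h(λa+(1−λ)b) ≤ λh(a)+(1−λ)h(b) − (λ(1−λ)/2)‖a−b‖² for all a,b ∈ X and λ ∈ [0,1]). Let y ∈ E and let x ∈ X attain the maximum over X of p ↦ ⟨y,p⟩ − h(p), and suppose h is differentiable at x with gradient g. Then for every p ∈ X: h(p) + (⟨y,x⟩ − h(x)) − ⟨y,p⟩ ≥ h(p) − h(x) − ⟨g, p − x⟩ ≥ (1/2)·‖p − x‖². (That is, the Fenchel coupling F(p,y) dominates the Bregman divergence D(p,x), which in turn dominates half the squared distance.) -/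
/-!
Maximality of `x` gives the first-order condition `⟪y - g, p - x⟫ ≤ 0`, which is the first
inequality. For the second, `h - ½‖·‖²` is convex on `X`, so it lies above its tangent at `x`;
expanding the squares turns this tangent inequality into `D(p, x) ≥ ½‖p - x‖²`.
-/

open scoped RealInnerProductSpace

section

variable {E : Type*} [NormedAddCommGroup E]

theorem IsMaxOn.hasFDerivWithinAt_sub_nonpos [NormedSpace ℝ E] {s : Set E} {f : E → ℝ}
    {f' : E →L[ℝ] ℝ} {x y : E} (hmax : IsMaxOn f s x) (hs : Convex ℝ s) (hx : x ∈ s)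
    (hy : y ∈ s) (hf : HasFDerivWithinAt f f' s x) : f' (y - x) ≤ 0 :=
  hmax.localize.hasFDerivWithinAt_nonpos hf
    (sub_mem_posTangentConeAt_of_segment_subset (hs.segment_subset hx hy))

theorem ConvexOn.hasFDerivWithinAt_sub_le [NormedSpace ℝ E] {s : Set E} {f : E → ℝ}
    {f' : E →L[ℝ] ℝ} {x y : E} (hf : ConvexOn ℝ s f) (hx : x ∈ s) (hy : y ∈ s)
    (hf' : HasFDerivWithinAt f f' s x) : f' (y - x) ≤ f y - f x := by
  set ℓ := AffineMap.lineMap (k := ℝ) x y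
  have hconv : ConvexOn ℝ (ℓ ⁻¹' s) (f ∘ ℓ) := hf.comp_affineMap ℓ
  have hderiv : HasDerivWithinAt (f ∘ ℓ) (f' (y - x)) (ℓ ⁻¹' s) 0 := by
    have hℓ : HasDerivWithinAt ℓ (y - x) (ℓ ⁻¹' s) 0 := by
      simpa using (AffineMap.hasDerivAt_lineMap (a := x) (b := y) (x := 0)).hasDerivWithinAt
    exact hf'.comp_hasDerivWithinAt_of_eq (x := 0) hℓ (Set.mapsTo_preimage _ _) (by simp [ℓ])
  have hslope := hconv.le_slope_of_hasDerivWithinAt (by simpa [ℓ]) (by simpa [ℓ]) one_pos hderiv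
  simpa [slope_def_field, ℓ] using hslope

theorem StrongConvexOn.inner_sub_add_le [InnerProductSpace ℝ E] {s : Set E} {m : ℝ} {f : E → ℝ}
    {g x y : E} (hf : StrongConvexOn s m f) (hx : x ∈ s) (hy : y ∈ s)
    (hg : HasFDerivWithinAt f (innerSL ℝ g) s x) :
    ⟪g, y - x⟫ + m / 2 * ‖y - x‖ ^ 2 ≤ f y - f x := by
  have htangent := (strongConvexOn_iff_convex.1 hf).hasFDerivWithinAt_sub_le hx hy
    (hg.sub ((hasStrictFDerivAt_norm_sq x).hasFDerivAt.hasFDerivWithinAt.const_mul (m / 2)))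
  have hsq : ‖y - x‖ ^ 2 = ‖y‖ ^ 2 - ‖x‖ ^ 2 - 2 * ⟪x, y - x⟫ := by
    rw [norm_sub_sq_real, inner_sub_right, real_inner_self_eq_norm_sq, real_inner_comm]; ring
  simp only [sub_apply, smul_apply, innerSL_apply_apply, smul_eq_mul, nsmul_eq_mul] at htangent
  rw [hsq]
  linarith

end

theorem fenchel_ge_bregman_ge_half_sq_dist_general
    {E : Type*} [NormedAddCommGroup E] [InnerProductSpace ℝ E]
    (X : Set E) (hXcv : Convex ℝ X)
    (h : E → ℝ) (hstrong : StrongConvexOn X 1 h)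
    (y x : E) (hx : x ∈ X)
    (hmax : ∀ p ∈ X, ⟪y, p⟫ - h p ≤ ⟪y, x⟫ - h x)
    (g : E) (hgrad : HasFDerivAt h (innerSL ℝ g) x) :
    ∀ p ∈ X,
      h p - h x - ⟪g, p - x⟫ ≤ h p + (⟪y, x⟫ - h x) - ⟪y, p⟫ ∧
        (1 / 2) * ‖p - x‖ ^ 2 ≤ h p - h x - ⟪g, p - x⟫ := by
  intro p hp
  have hoptimal : ⟪y, p - x⟫ - ⟪g, p - x⟫ ≤ 0 :=
    (isMaxOn_iff.2 hmax).hasFDerivWithinAt_sub_nonpos hXcv hx hp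
      ((innerSL ℝ y).hasFDerivAt.sub hgrad).hasFDerivWithinAt
  have hbregman := hstrong.inner_sub_add_le hx hp hgrad.hasFDerivWithinAt
  rw [inner_sub_right] at hoptimal
  constructor <;> linarith

/-- Lemma 4: the Fenchel coupling dominates the Bregman divergence, which dominates half
the squared distance.  Here `x` attains the maximum of `p ↦ ⟪y, p⟫ - h p` over `X` and
`g` is the gradient of `h` at `x`. -/
theorem fenchel_ge_bregman_ge_half_sq_dist
    {E : Type*} [NormedAddCommGroup E] [InnerProductSpace ℝ E]
    (X : Set E) (hXne : X.Nonempty) (hXcl : IsClosed X) (hXcv : Convex ℝ X)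
    (h : E → ℝ) (hconv : ConvexOn ℝ Set.univ h) (hstrong : StrongConvexOn X 1 h)
    (y x : E) (hx : x ∈ X)
    (hmax : ∀ p ∈ X, ⟪y, p⟫ - h p ≤ ⟪y, x⟫ - h x)
    (g : E) (hgrad : HasFDerivAt h (innerSL ℝ g) x) :
    ∀ p ∈ X,
      h p - h x - ⟪g, p - x⟫ ≤ h p + (⟪y, x⟫ - h x) - ⟪y, p⟫ ∧
        (1 / 2) * ‖p - x‖ ^ 2 ≤ h p - h x - ⟪g, p - x⟫ :=
  fenchel_ge_bregman_ge_half_sq_dist_general X hXcv h hstrong y x hx hmax g hgrad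
end

section
/- Let B > 0, let (δ_t)_{t≥1} be a sequence of nonnegative real numbers with δ_t ≤ B for all t, let τ > 0, and define η_t = √(τ + Σ_{s=1}^{t−1} δ_s). Then η_{t+1} − η_t → 0 and δ_t / η_t → 0 as t → ∞. -/
open Filter Finset Topology

/-!
Write `S_t = η_t²`. Since `√y - √x ≤ (y - x) / √x`, both quantities are squeezed by
`(S_{t+1} - S_t) / √S_t`. The sequence `S_t` is nondecreasing: if it diverges, this ratio is at
most `B / √S_t → 0`; if it converges to `l ≥ τ > 0`, its increments tend to `0` while `√S_t → √l`.
-/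

theorem Real.sqrt_sub_sqrt_le_sub_div_sqrt {x y : ℝ} (hx : 0 < x) (hxy : x ≤ y) :
    √y - √x ≤ (y - x) / √x := by
  rw [le_div_iff₀ (Real.sqrt_pos.2 hx)]
  have hy : 0 ≤ y := hx.le.trans hxy
  nlinarith [Real.sq_sqrt hx.le, Real.sq_sqrt hy, Real.sqrt_le_sqrt hxy, Real.sqrt_nonneg x]

namespace Monotone

variable {S : ℕ → ℝ} (hS : Monotone S) (hS0 : 0 < S 0) {B : ℝ}
  (hSB : ∀ᶠ t in atTop, S (t + 1) - S t ≤ B)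
include hS hS0 hSB

theorem tendsto_succ_sub_div_sqrt_zero :
    Tendsto (fun t => (S (t + 1) - S t) / √(S t)) atTop (𝓝 0) := by
  rcases tendsto_atTop_of_monotone hS with hS_top | ⟨l, hl⟩
  · have hB_div : Tendsto (fun t => B / √(S t)) atTop (𝓝 0) :=
      tendsto_const_nhds.div_atTop (Real.tendsto_sqrt_atTop.comp hS_top)
    refine tendsto_of_tendsto_of_tendsto_of_le_of_le' tendsto_const_nhds hB_div
      (Eventually.of_forall fun t => div_nonneg (sub_nonneg.2 (hS t.le_succ)) (Real.sqrt_nonneg _))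
      ?_
    filter_upwards [hSB] with t ht using div_le_div_of_nonneg_right ht (Real.sqrt_nonneg _)
  · have hl0 : 0 < l := hS0.trans_le (hS.ge_of_tendsto hl 0)
    have hS_diff : Tendsto (fun t => S (t + 1) - S t) atTop (𝓝 0) := by
      simpa using (hl.comp (tendsto_add_atTop_nat 1)).sub hl
    simpa only [zero_div, Pi.div_def] using hS_diff.div hl.sqrt (Real.sqrt_pos.2 hl0).ne'

theorem tendsto_sqrt_succ_sub_sqrt_zero :
    Tendsto (fun t => √(S (t + 1)) - √(S t)) atTop (𝓝 0) :=
  squeeze_zero (fun t => sub_nonneg.2 (Real.sqrt_le_sqrt (hS t.le_succ)))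
    (fun t => Real.sqrt_sub_sqrt_le_sub_div_sqrt (hS0.trans_le (hS t.zero_le)) (hS t.le_succ))
    (hS.tendsto_succ_sub_div_sqrt_zero hS0 hSB)

end Monotone

theorem adaptive_rate_increments_vanish_general
    (B : ℝ)
    (δ : ℕ → ℝ) (hδ0 : ∀ t : ℕ, 1 ≤ t → 0 ≤ δ t) (hδB : ∀ t : ℕ, 1 ≤ t → δ t ≤ B)
    (τ : ℝ) (hτ : 0 < τ)
    (η : ℕ → ℝ) (hη : ∀ t : ℕ, η t = Real.sqrt (τ + ∑ s ∈ Finset.Ico 1 t, δ s)) :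
    Tendsto (fun t : ℕ => η (t + 1) - η t) atTop (𝓝 0) ∧
      Tendsto (fun t : ℕ => δ t / η t) atTop (𝓝 0) := by
  set S : ℕ → ℝ := fun t => τ + ∑ s ∈ Ico 1 t, δ s
  obtain rfl : η = fun t => √(S t) := funext hη
  have hS_succ : ∀ t, 1 ≤ t → S (t + 1) - S t = δ t := fun t ht => by
    simp only [S, sum_Ico_succ_top ht]
    ring
  have hS : Monotone S := monotone_nat_of_le_succ fun t =>
    add_le_add_right (sum_le_sum_of_subset_of_nonneg (Ico_subset_Ico_right t.le_succ)
      fun s hs _ => hδ0 s (mem_Ico.1 hs).1) τ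
  have hS0 : 0 < S 0 := by simpa [S] using hτ
  have hSB : ∀ᶠ t in atTop, S (t + 1) - S t ≤ B := by
    filter_upwards [eventually_ge_atTop 1] with t ht
    exact (hS_succ t ht).trans_le (hδB t ht)
  refine ⟨hS.tendsto_sqrt_succ_sub_sqrt_zero hS0 hSB,
    (hS.tendsto_succ_sub_div_sqrt_zero hS0 hSB).congr' ?_⟩
  filter_upwards [eventually_ge_atTop 1] with t ht
  rw [hS_succ t ht]

/-- For the adaptive learning rate `η_t = √(τ + ∑_{s=1}^{t-1} δ_s)` built from bounded
nonnegative increments `δ_t ≤ B`, both `η_{t+1} - η_t` and `δ_t / η_t` tend to `0`. -/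
theorem adaptive_rate_increments_vanish
    (B : ℝ) (hB : 0 < B)
    (δ : ℕ → ℝ) (hδ0 : ∀ t : ℕ, 1 ≤ t → 0 ≤ δ t) (hδB : ∀ t : ℕ, 1 ≤ t → δ t ≤ B)
    (τ : ℝ) (hτ : 0 < τ)
    (η : ℕ → ℝ) (hη : ∀ t : ℕ, η t = Real.sqrt (τ + ∑ s ∈ Finset.Ico 1 t, δ s)) :
    Tendsto (fun t : ℕ => η (t + 1) - η t) atTop (𝓝 0) ∧
      Tendsto (fun t : ℕ => δ t / η t) atTop (𝓝 0) :=
  adaptive_rate_increments_vanish_general B δ hδ0 hδB τ hτ η hη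
end

section
/- Consider a continuous convex smooth game that is variationally stable, in which every player i runs OptDA with a regularizer h_i on X_i and the adaptive learning rate; by the finiteness of Σ_t ‖g_t^i − g_{t−1}^i‖², let η_i = lim_{t→∞} η_t^i ∈ ℝ. For each player i and t ≥ 1, let F_t^i(p) = h_i(p) − h_i(X_t^i) + (1/η_t^i)·⟨Σ_{s=1}^{t−1} g_s^i, p − X_t^i⟩ denote player i's Fenchel coupling at round t. Then for every Nash equilibrium x* of the game, the sequence Σ_{i=1}^{N} η_i · F_t^i(x*_i) converges to a finite limit as t → ∞. -/
/-!
Let `Φᵢ(t) = η_t^i F_t^i(x*_i)`; it is nonnegative because `X_t^i` minimizes the dual averaging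
objective. One OptDA step gives
`Φᵢ(t+1) ≤ Φᵢ(t) + ⟪g_t^i, x*_i - X_{t+1/2}^i⟫ + (η_{t+1}^i - η_t^i)(h_i(x*_i) - h_i(X_{t+1}^i))
  + ‖g_t^i - g_{t-1}^i‖² / η_t^i`,
and with the adaptive rate the last two terms are bounded by the increment of the convergent
sequence `‖∇h_i(x*_i)‖² η_t^i + (η_t^i)²`. Summed over the players, the inner products are
nonpositive by variational stability, so `∑ᵢ Φᵢ(t)` minus a convergent sequence is nonincreasing
and bounded below, and `∑ᵢ Φᵢ(t)` converges. Finally `η_i F_t^i = (η_i / η_t^i) Φᵢ(t)` with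
`η_i / η_t^i → 1` and `Φᵢ ≥ 0`, so the weighted sum has the same limit.
-/

open scoped RealInnerProductSpace
open Filter Finset Topology

noncomputable section

variable {ι : Type*} [Fintype ι] [DecidableEq ι] {E : ι → Type*}
  [∀ i, NormedAddCommGroup (E i)] [∀ i, InnerProductSpace ℝ (E i)]
  [∀ i, FiniteDimensional ℝ (E i)]

/-- The profile of actions played at round `t`, as a point of the joint space `PiLp 2 E`
(whose norm is the product norm `‖x‖ = √(∑ j ‖x j‖²)`). -/
def profileAt (W : ∀ i, ℕ → E i) (t : ℕ) : PiLp 2 E := WithLp.toLp 2 (fun j => W j t)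

/-- A continuous convex smooth game: each player `i` has a nonempty closed convex action set
`X i`, a continuous loss `L i` convex in the `i`-th variable, and a Lipschitz continuous map
`V i` selecting subgradients of `L i` in the `i`-th variable on the joint action space. -/
structure ConvexGame (X : ∀ i, Set (E i)) (L : ι → PiLp 2 E → ℝ)
    (V : ∀ i, PiLp 2 E → E i) : Prop where
  nonempty : ∀ i, (X i).Nonempty
  closed : ∀ i, IsClosed (X i)
  convexSet : ∀ i, Convex ℝ (X i)
  contLoss : ∀ i, Continuous (L i)
  convexLoss : ∀ i, ∀ x : PiLp 2 E,
    ConvexOn ℝ Set.univ fun p : E i => L i (WithLp.toLp 2 (Function.update x i p))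
  lipschitzV : ∀ i, ∃ K : NNReal, LipschitzWith K (V i)
  subgrad : ∀ i, ∀ x : PiLp 2 E, (∀ j, x j ∈ X j) → ∀ p ∈ X i,
    L i x + ⟪V i x, p - x i⟫ ≤ L i (WithLp.toLp 2 (Function.update x i p))

/-- `x` is a Nash equilibrium of the game. -/
def IsNashEq (X : ∀ i, Set (E i)) (L : ι → PiLp 2 E → ℝ) (x : PiLp 2 E) : Prop :=
  (∀ i, x i ∈ X i) ∧ ∀ i, ∀ p ∈ X i, L i x ≤ L i (WithLp.toLp 2 (Function.update x i p))

/-- The game is variationally stable. -/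
def VarStable (X : ∀ i, Set (E i)) (L : ι → PiLp 2 E → ℝ)
    (V : ∀ i, PiLp 2 E → E i) : Prop :=
  (∃ xs : PiLp 2 E, IsNashEq X L xs) ∧
    ∀ x : PiLp 2 E, (∀ j, x j ∈ X j) → ∀ xs : PiLp 2 E, IsNashEq X L xs →
      0 ≤ ∑ i, ⟪V i x, x i - xs i⟫

/-- Every player `i` runs OptDA with regularizer `h i` and the adaptive learning rate,
the feedback being the individual gradient `V i` evaluated at the realized profile. -/
structure AllOptDA (X : ∀ i, Set (E i)) (V : ∀ i, PiLp 2 E → E i)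
    (h : ∀ i, E i → ℝ) (Gh : ∀ i, E i → E i)
    (η : ∀ i, ℕ → ℝ) (g : ∀ i, ℕ → E i) (Z W : ∀ i, ℕ → E i) : Prop where
  reg : ∀ i, IsRegularizer (X i) (h i) (Gh i)
  g_zero : ∀ i, g i 0 = 0
  feedback : ∀ i, ∀ t : ℕ, 1 ≤ t → g i t = V i (profileAt W t)
  rate : ∀ i t, η i t = adaEta (g i) t
  run : ∀ i, IsOptDA (X i) (h i) (Gh i) (η i) (g i) (Z i) (W i)

section Convexity

variable {F : Type*} [NormedAddCommGroup F] [NormedSpace ℝ F] {s : Set F} {f : F → ℝ}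
  {f' : F →L[ℝ] ℝ}

theorem ConvexOn.add_fderiv_sub_le (hf : ConvexOn ℝ s f) {x y : F} (hx : x ∈ s) (hy : y ∈ s)
    (hd : HasFDerivAt f f' x) : f x + f' (y - x) ≤ f y := by
  have hline := hf.comp_affineMap (AffineMap.lineMap (k := ℝ) x y)
  have hderiv : HasDerivAt (f ∘ AffineMap.lineMap (k := ℝ) x y) (f' (y - x)) 0 := by
    have hd0 : HasFDerivAt f f' (AffineMap.lineMap (k := ℝ) x y 0) := by simpa using hd
    exact hd0.comp_hasDerivAt 0 AffineMap.hasDerivAt_lineMap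
  have hslope := hline.le_slope_of_hasDerivAt (x := 0) (y := 1) (by simpa using hx)
    (by simpa using hy) zero_lt_one hderiv
  simp only [slope, Function.comp_apply, AffineMap.lineMap_apply_zero,
    AffineMap.lineMap_apply_one, vsub_eq_sub, sub_zero, inv_one, one_smul] at hslope
  linarith

theorem StrongConvexOn.add_fderiv_sub_add_le {m : ℝ} (hf : StrongConvexOn s m f) (hm : 0 ≤ m)
    {x y : F} (hx : x ∈ s) (hy : y ∈ s) (hd : HasFDerivAt f f' x) :
    f x + f' (y - x) + m / 4 * ‖y - x‖ ^ 2 ≤ f y := by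
  have hmid := hf.2 hx hy one_half_pos.le one_half_pos.le (add_halves 1)
  have hgrad := (hf.convexOn fun r => by positivity).add_fderiv_sub_le hx
    (hf.1 hx hy one_half_pos.le one_half_pos.le (add_halves 1)) hd
  have hsub : ((1 / 2 : ℝ) • x + (1 / 2 : ℝ) • y) - x = (1 / 2 : ℝ) • (y - x) := by module
  rw [hsub, map_smul, smul_eq_mul] at hgrad
  simp only [smul_eq_mul, norm_sub_rev x y] at hmid
  linarith

theorem StrongConvexOn.add_norm_sq_le_of_isMinOn {m : ℝ} {z x : F} (hf : StrongConvexOn s m f)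
    (hmin : IsMinOn f s z) (hz : z ∈ s) (hx : x ∈ s) :
    f z + m / 4 * ‖x - z‖ ^ 2 ≤ f x := by
  have hmid := hf.2 hx hz one_half_pos.le one_half_pos.le (add_halves 1)
  have hle := isMinOn_iff.1 hmin _ (hf.1 hx hz one_half_pos.le one_half_pos.le (add_halves 1))
  simp only [smul_eq_mul] at hmid
  linarith

theorem IsMinOn.fderiv_sub_nonneg {z x : F} (hmin : IsMinOn f s z) (hs : Convex ℝ s)
    (hz : z ∈ s) (hx : x ∈ s) (hd : HasFDerivAt f f' z) : 0 ≤ f' (x - z) :=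
  hmin.localize.hasFDerivWithinAt_nonneg hd.hasFDerivWithinAt
    (sub_mem_posTangentConeAt_of_segment_subset (hs.segment_subset hz hx))

end Convexity

theorem real_inner_sub_mul_norm_sq_le {F : Type*} [NormedAddCommGroup F] [InnerProductSpace ℝ F]
    {η : ℝ} (hη : 0 < η) (u v : F) : ⟪u, v⟫ - η / 4 * ‖v‖ ^ 2 ≤ ‖u‖ ^ 2 / η := by
  rw [le_div_iff₀ hη]
  nlinarith [real_inner_le_norm u v, sq_nonneg (‖u‖ - η * ‖v‖ / 2)]

section OptDA

variable {F : Type*} [NormedAddCommGroup F] [InnerProductSpace ℝ F] {X : Set F} {h : F → ℝ}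
  {Gh : F → F}

/-- `η` times the paper's Fenchel coupling `h p - h z + η⁻¹ ⟪y, p - z⟫`, where `y` is the
cumulative feedback and `z` the base state it generates. -/
def scaledCoupling (h : F → ℝ) (y : F) (η : ℝ) (z p : F) : ℝ :=
  ⟪y, p - z⟫ + η * (h p - h z)

theorem scaledCoupling_add (h : F → ℝ) (y v : F) (η η' : ℝ) (z z' p : F) :
    scaledCoupling h (y + v) η' z' p = scaledCoupling h y η z p - scaledCoupling h y η z z'
      + ⟪v, p - z'⟫ + (η' - η) * (h p - h z') := by
  simp only [scaledCoupling, inner_add_left, inner_sub_right]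
  ring

theorem scaledCoupling_nonneg_of_isMinOn {y : F} {η : ℝ} {z p : F}
    (hmin : IsMinOn (fun q => ⟪y, q⟫ + η * h q) X z) (hp : p ∈ X) :
    0 ≤ scaledCoupling h y η z p := by
  have := isMinOn_iff.1 hmin p hp
  simp only [scaledCoupling, inner_sub_right]
  linarith

theorem mul_breg_le_scaledCoupling_of_isMinOn {y : F} {η : ℝ} {z q : F} (hX : Convex ℝ X)
    (hd : HasFDerivAt h (innerSL ℝ (Gh z)) z) (hmin : IsMinOn (fun q => ⟪y, q⟫ + η * h q) X z)
    (hz : z ∈ X) (hq : q ∈ X) :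
    η * breg h Gh q z ≤ scaledCoupling h y η z q := by
  have hd' : HasFDerivAt (fun q => ⟪y, q⟫ + η * h q) (innerSL ℝ y + η • innerSL ℝ (Gh z)) z :=
    (innerSL ℝ y).hasFDerivAt.add (hd.const_mul η)
  have hfirst := hmin.fderiv_sub_nonneg hX hz hq hd'
  simp only [add_apply, smul_apply, innerSL_apply_apply, smul_eq_mul] at hfirst
  simp only [scaledCoupling, breg]
  linarith

theorem StrongConvexOn.inner_add_mul_breg (hh : StrongConvexOn X 1 h) {η : ℝ} (hη : 0 ≤ η)
    (v z : F) : StrongConvexOn X η (fun q => ⟪v, q⟫ + η * breg h Gh q z) := by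
  refine ⟨hh.1, fun x hx y hy a b ha hb hab => ?_⟩
  have := hh.2 hx hy ha hb hab
  obtain rfl : b = 1 - a := by linarith
  simp only [breg, smul_eq_mul, inner_sub_right, inner_add_right, real_inner_smul_right] at this ⊢
  linear_combination η * this

theorem IsRegularizer.breg_nonneg (reg : IsRegularizer X h Gh) (p x : F) : 0 ≤ breg h Gh p x := by
  have := reg.convex.add_fderiv_sub_le (Set.mem_univ x) (Set.mem_univ p) (reg.grad x)
  rw [innerSL_apply_apply] at this
  simp only [breg]
  linarith

theorem IsRegularizer.sub_norm_sq_le (reg : IsRegularizer X h Gh) {p x : F} (hp : p ∈ X)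
    (hx : x ∈ X) : h p - ‖Gh p‖ ^ 2 ≤ h x := by
  have hgrowth := reg.strong.add_fderiv_sub_add_le zero_le_one hp hx (reg.grad p)
  have hamgm := real_inner_sub_mul_norm_sq_le one_pos (-Gh p) (x - p)
  rw [innerSL_apply_apply] at hgrowth
  rw [inner_neg_left, norm_neg, div_one] at hamgm
  linarith

variable {η : ℕ → ℝ} {g Z W : ℕ → F}

theorem IsOptDA.isMinOn_base (run : IsOptDA X h Gh η g Z W) {t : ℕ} (ht : 1 ≤ t) :
    IsMinOn (fun q => ⟪∑ s ∈ Finset.Ico 1 t, g s, q⟫ + η t * h q) X (Z t) :=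
  isMinOn_iff.2 (run.base_min t ht)

theorem IsOptDA.isMinOn_lead (run : IsOptDA X h Gh η g Z W) {t : ℕ} (ht : 1 ≤ t) :
    IsMinOn (fun q => ⟪g (t - 1), q⟫ + η t * breg h Gh q (Z t)) X (W t) :=
  isMinOn_iff.2 (run.lead_min t ht)

theorem IsOptDA.scaledCoupling_succ_le (reg : IsRegularizer X h Gh)
    (run : IsOptDA X h Gh η g Z W) {p : F} {t : ℕ} (ht : 1 ≤ t) :
    scaledCoupling h (∑ s ∈ Finset.Ico 1 (t + 1), g s) (η (t + 1)) (Z (t + 1)) p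
      ≤ scaledCoupling h (∑ s ∈ Finset.Ico 1 t, g s) (η t) (Z t) p + ⟪g t, p - W t⟫
        + (η (t + 1) - η t) * (h p - h (Z (t + 1))) + ‖g t - g (t - 1)‖ ^ 2 / η t := by
  have hη := run.eta_pos t ht
  have hZ := run.base_mem t ht
  have hZ' := run.base_mem (t + 1) (by omega)
  have hW := run.lead_mem t ht
  have hbase := mul_breg_le_scaledCoupling_of_isMinOn reg.strong.1 (reg.grad (Z t))
    (run.isMinOn_base ht) hZ hZ'
  have hlead := (reg.strong.inner_add_mul_breg hη.le (g (t - 1)) (Z t)).add_norm_sq_le_of_isMinOn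
    (run.isMinOn_lead ht) hW hZ'
  have hW_breg := mul_nonneg hη.le (reg.breg_nonneg (W t) (Z t))
  have hamgm := real_inner_sub_mul_norm_sq_le hη (g t - g (t - 1)) (W t - Z (t + 1))
  rw [Finset.sum_Ico_succ_top ht, scaledCoupling_add _ _ _ (η t)]
  rw [norm_sub_rev] at hamgm
  simp only [inner_sub_left, inner_sub_right] at hamgm hlead ⊢
  -- `Z (t + 1)` competes both in the dual averaging step at `t` and in the prox step defining
  -- `W t`; Young's inequality absorbs the quadratic gain of the latter.
  linear_combination hbase + hlead + hW_breg + hamgm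

end OptDA

section AdaptiveRate

variable {F : Type*} [NormedAddCommGroup F] [InnerProductSpace ℝ F]

theorem one_le_adaEta (g : ℕ → F) (t : ℕ) : 1 ≤ adaEta g t :=
  Real.one_le_sqrt.2 (le_add_of_nonneg_right (Finset.sum_nonneg fun _ _ => sq_nonneg _))

theorem adaEta_mono (g : ℕ → F) : Monotone (adaEta g) := fun _ _ htu =>
  Real.sqrt_le_sqrt (add_le_add_right (Finset.sum_le_sum_of_subset_of_nonneg
    (Finset.Ico_subset_Ico le_rfl htu) fun _ _ _ => sq_nonneg _) 1)

theorem adaEta_succ_sq (g : ℕ → F) {t : ℕ} (ht : 1 ≤ t) :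
    adaEta g (t + 1) ^ 2 = adaEta g t ^ 2 + ‖g t - g (t - 1)‖ ^ 2 := by
  have hnonneg : ∀ u, 0 ≤ 1 + ∑ s ∈ Finset.Ico 1 u, ‖g s - g (s - 1)‖ ^ 2 := fun _ =>
    add_nonneg zero_le_one (Finset.sum_nonneg fun _ _ => sq_nonneg _)
  rw [adaEta, adaEta, Real.sq_sqrt (hnonneg _), Real.sq_sqrt (hnonneg _),
    Finset.sum_Ico_succ_top ht]
  ring

theorem IsOptDA.scaledCoupling_succ_le_of_adaEta {X : Set F} {h : F → ℝ} {Gh : F → F}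
    {g Z W : ℕ → F} (reg : IsRegularizer X h Gh) (run : IsOptDA X h Gh (adaEta g) g Z W)
    {p : F} (hp : p ∈ X) {t : ℕ} (ht : 1 ≤ t) :
    scaledCoupling h (∑ s ∈ Finset.Ico 1 (t + 1), g s) (adaEta g (t + 1)) (Z (t + 1)) p
      ≤ scaledCoupling h (∑ s ∈ Finset.Ico 1 t, g s) (adaEta g t) (Z t) p + ⟪g t, p - W t⟫
        + ((‖Gh p‖ ^ 2 * adaEta g (t + 1) + adaEta g (t + 1) ^ 2)
          - (‖Gh p‖ ^ 2 * adaEta g t + adaEta g t ^ 2)) := by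
  have hstep := run.scaledCoupling_succ_le reg (p := p) ht
  have hlow := reg.sub_norm_sq_le hp (run.base_mem (t + 1) (by omega))
  have hrate := mul_le_mul_of_nonneg_left (sub_le_comm.1 hlow)
    (sub_nonneg.2 (adaEta_mono g (Nat.le_succ t)))
  have hdiv : ‖g t - g (t - 1)‖ ^ 2 / adaEta g t ≤ ‖g t - g (t - 1)‖ ^ 2 :=
    div_le_self (sq_nonneg _) (one_le_adaEta g t)
  have hsq := adaEta_succ_sq g ht
  linarith

end AdaptiveRate

theorem exists_tendsto_of_le_add_sub {u b : ℕ → ℝ} {β : ℝ} (hu : ∀ n, 0 ≤ u n)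
    (hstep : ∀ n, u (n + 1) ≤ u n + (b (n + 1) - b n)) (hb : Tendsto b atTop (𝓝 β)) :
    ∃ c, Tendsto u atTop (𝓝 c) := by
  have hanti : Antitone (u - b) := antitone_nat_of_succ_le fun n => by
    simp only [Pi.sub_apply]
    linarith [hstep n]
  obtain ⟨B, hB⟩ := hb.bddAbove_range
  have hbdd : BddBelow (Set.range (u - b)) := ⟨-B, by
    rintro _ ⟨n, rfl⟩
    linarith [hu n, hB ⟨n, rfl⟩, show (u - b) n = u n - b n from rfl]⟩
  exact ⟨_, by simpa using (tendsto_atTop_ciInf hanti hbdd).add hb⟩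

theorem tendsto_sum_mul_of_tendsto_one {α κ : Type*} {l : Filter α} {s : Finset κ}
    {u φ : κ → α → ℝ} {c : ℝ} (hu : ∀ i ∈ s, Tendsto (u i) l (𝓝 1))
    (hφ : ∀ᶠ a in l, ∀ i ∈ s, 0 ≤ φ i a) (hsum : Tendsto (fun a => ∑ i ∈ s, φ i a) l (𝓝 c)) :
    Tendsto (fun a => ∑ i ∈ s, u i a * φ i a) l (𝓝 c) := by
  have hbound : Tendsto (fun a => (∑ i ∈ s, |u i a - 1|) * ∑ i ∈ s, φ i a) l (𝓝 0) := by
    simpa using (tendsto_finsetSum s fun i hi => ((hu i hi).sub_const 1).abs).mul hsum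
  have herr : Tendsto (fun a => ∑ i ∈ s, (u i a - 1) * φ i a) l (𝓝 0) := by
    refine squeeze_zero_norm' ?_ hbound
    filter_upwards [hφ] with a ha
    calc ‖∑ i ∈ s, (u i a - 1) * φ i a‖ ≤ ∑ i ∈ s, |u i a - 1| * φ i a := by
          refine (norm_sum_le _ _).trans_eq (Finset.sum_congr rfl fun i hi => ?_)
          rw [Real.norm_eq_abs, abs_mul, abs_of_nonneg (ha i hi)]
      _ ≤ ∑ i ∈ s, |u i a - 1| * ∑ j ∈ s, φ j a :=
          Finset.sum_le_sum fun i hi => mul_le_mul_of_nonneg_left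
            (Finset.single_le_sum (f := fun j => φ j a) ha hi) (abs_nonneg _)
      _ = (∑ i ∈ s, |u i a - 1|) * ∑ j ∈ s, φ j a := (Finset.sum_mul _ _ _).symm
  simpa [sub_mul, Finset.sum_sub_distrib] using hsum.add herr

section Game

omit [∀ i, FiniteDimensional ℝ (E i)]

variable {X : ∀ i, Set (E i)} {L : ι → PiLp 2 E → ℝ} {V : ∀ i, PiLp 2 E → E i}
  {h : ∀ i, E i → ℝ} {Gh : ∀ i, E i → E i} {η : ι → ℕ → ℝ} {g : ∀ i, ℕ → E i}
  {Z W : ∀ i, ℕ → E i} {xs : PiLp 2 E}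

theorem AllOptDA.sum_inner_feedback_nonpos (setup : AllOptDA X V h Gh η g Z W)
    (hvs : VarStable X L V) (hxs : IsNashEq X L xs) {t : ℕ} (ht : 1 ≤ t) :
    ∑ i, ⟪g i t, xs i - W i t⟫ ≤ 0 := by
  have hstable := hvs.2 (profileAt W t) (fun j => (setup.run j).lead_mem t ht) xs hxs
  rw [← neg_nonneg, ← Finset.sum_neg_distrib]
  refine hstable.trans_eq (Finset.sum_congr rfl fun i _ => ?_)
  rw [setup.feedback i t ht, ← inner_neg_right, neg_sub]
  rfl

theorem AllOptDA.exists_tendsto_sum_scaledCoupling (setup : AllOptDA X V h Gh η g Z W)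
    (hvs : VarStable X L V) (hxs : IsNashEq X L xs) {ηlim : ι → ℝ}
    (hηlim : ∀ i, Tendsto (η i) atTop (𝓝 (ηlim i))) :
    ∃ c, Tendsto (fun t => ∑ i, scaledCoupling (h i) (∑ s ∈ Finset.Ico 1 t, g i s) (η i t)
      (Z i t) (xs i)) atTop (𝓝 c) := by
  obtain rfl : η = fun i => adaEta (g i) := funext fun i => funext (setup.rate i)
  have hbound : Tendsto (fun t => ∑ i, (‖Gh i (xs i)‖ ^ 2 * adaEta (g i) t + adaEta (g i) t ^ 2))
      atTop (𝓝 (∑ i, (‖Gh i (xs i)‖ ^ 2 * ηlim i + ηlim i ^ 2))) :=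
    tendsto_finsetSum _ fun i _ => ((hηlim i).const_mul _).add ((hηlim i).pow 2)
  refine (exists_tendsto_of_le_add_sub
    (u := fun n => ∑ i, scaledCoupling (h i) (∑ s ∈ Finset.Ico 1 (n + 1), g i s)
      (adaEta (g i) (n + 1)) (Z i (n + 1)) (xs i))
    (fun n => Finset.sum_nonneg fun i _ => scaledCoupling_nonneg_of_isMinOn
      ((setup.run i).isMinOn_base (t := n + 1) (by omega)) (hxs.1 i))
    (fun n => ?_) (hbound.comp (tendsto_add_atTop_nat 1))).imp
    fun _ => (tendsto_add_atTop_iff_nat 1).1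
  have hsum := Finset.sum_le_sum fun i (_ : i ∈ Finset.univ) =>
    (setup.run i).scaledCoupling_succ_le_of_adaEta (setup.reg i) (hxs.1 i) (t := n + 1)
      (by omega)
  have hfeedback := setup.sum_inner_feedback_nonpos hvs hxs (t := n + 1) (by omega)
  simp only [Finset.sum_add_distrib, Finset.sum_sub_distrib] at hsum
  simp only [Function.comp_apply, Finset.sum_add_distrib]
  linarith

end Game

theorem weighted_fenchel_coupling_converges_general
    (X : ∀ i, Set (E i)) (L : ι → PiLp 2 E → ℝ) (V : ∀ i, PiLp 2 E → E i)
    (hvs : VarStable X L V)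
    (h : ∀ i, E i → ℝ) (Gh : ∀ i, E i → E i)
    (η : ∀ i, ℕ → ℝ) (g : ∀ i, ℕ → E i) (Z W : ∀ i, ℕ → E i)
    (setup : AllOptDA X V h Gh η g Z W)
    (ηlim : ι → ℝ) (hηlim : ∀ i, Tendsto (fun t : ℕ => η i t) atTop (𝓝 (ηlim i))) :
    ∀ xs : PiLp 2 E, IsNashEq X L xs →
      ∃ c : ℝ, Tendsto (fun t : ℕ => ∑ i, ηlim i *
        (h i (xs i) - h i (Z i t) +
          (1 / η i t) * ⟪∑ s ∈ Finset.Ico 1 t, g i s, xs i - Z i t⟫)) atTop (𝓝 c) := by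
  intro xs hxs
  obtain ⟨c, hc⟩ := setup.exists_tendsto_sum_scaledCoupling hvs hxs hηlim
  have hη : ∀ i t, 1 ≤ η i t := fun i t => setup.rate i t ▸ one_le_adaEta (g i) t
  have hηlim_pos : ∀ i, 0 < ηlim i := fun i => one_pos.trans_le (ge_of_tendsto' (hηlim i) (hη i))
  have hratio : ∀ i ∈ Finset.univ, Tendsto (fun t => ηlim i / η i t) atTop (𝓝 1) := fun i _ => by
    simpa [div_eq_mul_inv, mul_inv_cancel₀ (hηlim_pos i).ne'] using
      ((hηlim i).inv₀ (hηlim_pos i).ne').const_mul (ηlim i)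
  have hnonneg : ∀ᶠ t in atTop, ∀ i ∈ Finset.univ, 0 ≤ scaledCoupling (h i)
      (∑ s ∈ Finset.Ico 1 t, g i s) (η i t) (Z i t) (xs i) := by
    filter_upwards [eventually_ge_atTop 1] with t ht i _
    exact scaledCoupling_nonneg_of_isMinOn ((setup.run i).isMinOn_base ht) (hxs.1 i)
  refine ⟨c, (tendsto_sum_mul_of_tendsto_one hratio hnonneg hc).congr fun t =>
    Finset.sum_congr rfl fun i _ => ?_⟩
  have hη_ne : η i t ≠ 0 := (one_pos.trans_le (hη i t)).ne'
  simp only [scaledCoupling]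
  field_simp
  ring

/-- Lemma 6: in a variationally stable game where all players run OptDA with the adaptive
learning rate, the aggregate (limit-rate weighted) Fenchel coupling to any Nash
equilibrium converges. -/
theorem weighted_fenchel_coupling_converges
    (X : ∀ i, Set (E i)) (L : ι → PiLp 2 E → ℝ) (V : ∀ i, PiLp 2 E → E i)
    (game : ConvexGame X L V) (hvs : VarStable X L V)
    (h : ∀ i, E i → ℝ) (Gh : ∀ i, E i → E i)
    (η : ∀ i, ℕ → ℝ) (g : ∀ i, ℕ → E i) (Z W : ∀ i, ℕ → E i)
    (setup : AllOptDA X V h Gh η g Z W)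
    (ηlim : ι → ℝ) (hηlim : ∀ i, Tendsto (fun t : ℕ => η i t) atTop (𝓝 (ηlim i))) :
    ∀ xs : PiLp 2 E, IsNashEq X L xs →
      ∃ c : ℝ, Tendsto (fun t : ℕ => ∑ i, ηlim i *
        (h i (xs i) - h i (Z i t) +
          (1 / η i t) * ⟪∑ s ∈ Finset.Ico 1 t, g i s, xs i - Z i t⟫)) atTop (𝓝 c) :=
  weighted_fenchel_coupling_converges_general X L V hvs h Gh η g Z W setup ηlim hηlim
end
end

section
/- Let A ∈ ℝ^{n×m} be the matrix of a two-player zero-sum matrix game with value v. Call a pure strategy j ∈ {1,…,n} of player 1 essential if there exists a Nash equilibrium (x,y) with x_j > 0, and a pure strategy k ∈ {1,…,m} of player 2 essential if there exists a Nash equilibrium (x,y) with y_k > 0. Then there exists a Nash equilibrium (x*, y*) such that x*_j > 0 for every essential strategy j of player 1 and y*_k > 0 for every essential strategy k of player 2, and moreover (A y*)_j > v for every j ∉ supp(x*) and (Aᵀ x*)_k < v for every k ∉ supp(y*). -/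
open Matrix Filter Finset Topology

noncomputable section

/-- `(x, y)` is a Nash equilibrium of the two-player zero-sum matrix game with matrix `A`,
where player 1 minimizes `xᵀAy` over the simplex and player 2 maximizes it. -/
def IsNashPair {n m : ℕ} (A : Matrix (Fin n) (Fin m) ℝ)
    (x : Fin n → ℝ) (y : Fin m → ℝ) : Prop :=
  x ∈ stdSimplex ℝ (Fin n) ∧ y ∈ stdSimplex ℝ (Fin m) ∧
    (∀ x' ∈ stdSimplex ℝ (Fin n), x ⬝ᵥ A.mulVec y ≤ x' ⬝ᵥ A.mulVec y) ∧
    ∀ y' ∈ stdSimplex ℝ (Fin m), x ⬝ᵥ A.mulVec y' ≤ x ⬝ᵥ A.mulVec y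

/-- The value `v = min_{x ∈ Δ_n} max_{y ∈ Δ_m} xᵀAy` of the matrix game. -/
def gameValue {n m : ℕ} (A : Matrix (Fin n) (Fin m) ℝ) : ℝ :=
  sInf ((fun x => sSup ((fun y => x ⬝ᵥ A.mulVec y) '' stdSimplex ℝ (Fin m)))
    '' stdSimplex ℝ (Fin n))

/-!
Nash equilibria are exactly the pairs `(x, y)` of mixed strategies with `Aᵀx ≤ v` and `Ay ≥ v`
componentwise, where `v` is the value (which exists by the minimax theorem). These optimal
strategies form convex sets, and the inequalities involved are affine, so an average of finitely
many optimal strategies is strict wherever one of them is. By Farkas' lemma (finitely generated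
cones are closed, by a conic Carathéodory argument), for every row `j` either some optimal `x` has
`x j > 0` or some optimal `y` has `(A y) j > v`, and dually for columns. Averaging one witness per
row and column gives the required equilibrium.
-/

open Function

section FinitelyGeneratedCone

variable {ι : Type*} [Fintype ι]

theorem exists_sub_smul_nonneg_support_ssubset {u c : ι → ℝ} (hu : 0 ≤ u) (hc : c ≠ 0)
    (hcu : support c ⊆ support u) :
    ∃ t : ℝ, 0 ≤ u - t • c ∧ support (u - t • c) ⊂ support u := by
  classical
  -- the largest step keeping `u - t • c ≥ 0` zeroes the coordinate minimizing `u i / |c i|`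
  obtain ⟨i₀, hi₀, hmin⟩ := Finset.exists_min_image {i | c i ≠ 0} (fun i => u i / |c i|)
    (by simpa [Finset.Nonempty, funext_iff] using hc)
  simp only [Finset.mem_filter, Finset.mem_univ, true_and] at hi₀ hmin
  refine ⟨u i₀ / c i₀, fun i => ?_, ?_⟩
  · by_cases hci : c i = 0
    · simpa [hci] using hu i
    have hle : |u i₀ / c i₀ * c i| ≤ u i := by
      rw [abs_mul, abs_div, abs_of_nonneg (hu i₀)]
      calc u i₀ / |c i₀| * |c i| ≤ u i / |c i| * |c i| :=
          mul_le_mul_of_nonneg_right (hmin i hci) (abs_nonneg _)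
        _ = u i := div_mul_cancel₀ _ (abs_ne_zero.2 hci)
    simp only [Pi.sub_apply, Pi.smul_apply, smul_eq_mul, Pi.zero_apply]
    linarith [le_abs_self (u i₀ / c i₀ * c i)]
  · refine (Set.ssubset_iff_of_subset fun i hi => ?_).2 ⟨i₀, hcu hi₀, by simp [hi₀]⟩
    by_contra hui
    have hci : c i = 0 := notMem_support.1 fun h => hui (hcu h)
    simp_all

variable {E : Type*} [AddCommGroup E] [Module ℝ E]

theorem LinearMap.exists_nonneg_eq_and_injOn_support (φ : (ι → ℝ) →ₗ[ℝ] E) {u : ι → ℝ}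
    (hu : 0 ≤ u) :
    ∃ u', 0 ≤ u' ∧ φ u' = φ u ∧ ∀ c, support c ⊆ support u' → φ c = 0 → c = 0 := by
  induction hS : support u using WellFoundedLT.induction generalizing u with
  | _ S ih =>
    subst hS
    by_cases hinj : ∀ c, support c ⊆ support u → φ c = 0 → c = 0
    · exact ⟨u, hu, rfl, hinj⟩
    push Not at hinj
    obtain ⟨c, hcu, hφc, hc⟩ := hinj
    obtain ⟨t, ht, hlt⟩ := exists_sub_smul_nonneg_support_ssubset hu hc hcu
    obtain ⟨u', hu', hφ, hinj'⟩ := ih _ hlt ht rfl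
    exact ⟨u', hu', by simp [hφ, hφc], hinj'⟩

variable [TopologicalSpace E] [IsTopologicalAddGroup E] [ContinuousSMul ℝ E] [T2Space E]

open Topology in
theorem LinearMap.isClosed_image_nonneg_support_subset (φ : (ι → ℝ) →ₗ[ℝ] E) {S : Set ι}
    (hS : ∀ c, support c ⊆ S → φ c = 0 → c = 0) :
    IsClosed (φ '' {u | 0 ≤ u ∧ support u ⊆ S}) := by
  let W : Submodule ℝ (ι → ℝ) := Submodule.pi Sᶜ fun _ => ⊥
  have hW : ∀ c, c ∈ W ↔ support c ⊆ S := fun c => by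
    rw [support_subset_iff']
    simp [W, Submodule.mem_pi]
  have hker : LinearMap.ker (φ.domRestrict W) = ⊥ :=
    LinearMap.ker_eq_bot'.2 fun c hc => Subtype.ext (hS c ((hW c).1 c.2) hc)
  have himg : φ '' {u | 0 ≤ u ∧ support u ⊆ S} = φ.domRestrict W '' {c | 0 ≤ (c : ι → ℝ)} := by
    ext z
    constructor
    · rintro ⟨u, ⟨hu, huS⟩, rfl⟩
      exact ⟨⟨u, (hW u).2 huS⟩, hu, rfl⟩
    · rintro ⟨c, hc, rfl⟩
      exact ⟨c, ⟨hc, (hW c).1 c.2⟩, rfl⟩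
  rw [himg]
  exact (LinearMap.isClosedEmbedding_of_injective hker).isClosedMap _
    (isClosed_le continuous_const continuous_subtype_val)

theorem LinearMap.isClosed_image_Ici_zero (φ : (ι → ℝ) →ₗ[ℝ] E) : IsClosed (φ '' Set.Ici 0) := by
  have hunion : φ '' Set.Ici 0 = ⋃ S ∈ {S : Set ι | ∀ c, support c ⊆ S → φ c = 0 → c = 0},
      φ '' {u | 0 ≤ u ∧ support u ⊆ S} := by
    refine subset_antisymm ?_ (Set.iUnion₂_subset fun S _ => Set.image_mono fun u hu => hu.1)
    rintro _ ⟨u, hu, rfl⟩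
    obtain ⟨u', hu', hφ, hinj⟩ := φ.exists_nonneg_eq_and_injOn_support hu
    exact Set.mem_biUnion hinj ⟨u', ⟨hu', subset_rfl⟩, hφ⟩
  rw [hunion]
  exact (Set.toFinite _).isClosed_biUnion fun S hS => φ.isClosed_image_nonneg_support_subset hS

end FinitelyGeneratedCone

theorem Matrix.exists_nonneg_le_mulVec_or_exists_nonneg_transpose_mulVec_nonpos
    {ι κ : Type*} [Fintype ι] [Fintype κ] (B : Matrix ι κ ℝ) (b : ι → ℝ) :
    (∃ y, 0 ≤ y ∧ b ≤ B *ᵥ y) ∨ ∃ x, 0 ≤ x ∧ Bᵀ *ᵥ x ≤ 0 ∧ 0 < b ⬝ᵥ x := by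
  classical
  refine or_iff_not_imp_left.2 fun hb => ?_
  -- `b` lies outside the closed cone `{B y - s | y, s ≥ 0}`; a separating functional gives `x`.
  let M : Matrix ι (κ ⊕ ι) ℝ := fromCols B (-1)
  let C : ProperCone ℝ (ι → ℝ) :=
    { toSubmodule := (PointedCone.positive ℝ _).map M.mulVecLin
      isClosed' := by simpa [PointedCone.coe_map] using M.mulVecLin.isClosed_image_Ici_zero }
  have hbC : b ∉ C := by
    rintro ⟨p, hp, rfl⟩
    refine hb ⟨p ∘ Sum.inl, fun k => hp (Sum.inl k), fun i => ?_⟩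
    simpa [M, fromCols_mulVec, neg_mulVec] using hp (Sum.inr i)
  obtain ⟨f, hfC, hfb⟩ := C.hyperplane_separation_point hbC
  set w : ι → ℝ := fun i => f (Pi.single i 1)
  have hf : ∀ z, f z = z ⬝ᵥ w := fun z => by
    have := LinearMap.congr_fun ((LinearEquiv.piRing ℝ ℝ ι ℝ).symm_apply_apply f.toLinearMap) z
    rw [LinearEquiv.piRing_symm_apply] at this
    simpa [dotProduct] using this.symm
  have hwM : ∀ s, 0 ≤ (w ᵥ* M) s := fun s => by
    have := hfC (M *ᵥ Pi.single s 1) ⟨Pi.single s 1, by simp, rfl⟩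
    rwa [hf, dotProduct_comm, dotProduct_mulVec, dotProduct_single, mul_one] at this
  have hwM' : w ᵥ* M = Sum.elim (w ᵥ* B) (-w) := by simp [M, vecMul_fromCols, vecMul_neg]
  refine ⟨-w, fun i => by simpa [hwM'] using hwM (Sum.inr i), fun k => ?_, ?_⟩
  · simpa [mulVec_transpose, neg_vecMul, hwM'] using hwM (Sum.inl k)
  · simpa [← hf] using hfb

theorem LinearMap.exists_isSaddlePointOn {E F : Type*}
    [TopologicalSpace E] [AddCommGroup E] [Module ℝ E] [IsTopologicalAddGroup E]
    [ContinuousSMul ℝ E] [FiniteDimensional ℝ E] [T2Space E]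
    [TopologicalSpace F] [AddCommGroup F] [Module ℝ F] [IsTopologicalAddGroup F]
    [ContinuousSMul ℝ F] [FiniteDimensional ℝ F] [T2Space F]
    (B : E →ₗ[ℝ] F →ₗ[ℝ] ℝ) {X : Set E} {Y : Set F} (hX : X.Nonempty) (hXc : Convex ℝ X)
    (hXk : IsCompact X) (hY : Y.Nonempty) (hYc : Convex ℝ Y) (hYk : IsCompact Y) :
    ∃ a ∈ X, ∃ b ∈ Y, IsSaddlePointOn X Y (fun x y => B x y) a b :=
  Sion.exists_isSaddlePointOn hX hXc hXk
    (fun y _ =>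
      (B.flip y).continuous_of_finiteDimensional.lowerSemicontinuous.lowerSemicontinuousOn _)
    (fun y _ => ((B.flip y).convexOn hXc).quasiconvexOn) hYc hY hYk
    (fun x _ => (B x).continuous_of_finiteDimensional.upperSemicontinuous.upperSemicontinuousOn _)
    (fun x _ => ((B x).concaveOn hYc).quasiconcaveOn)

theorem exists_mem_forall_pos_of_concaveOn {E ι : Type*} [AddCommGroup E] [Module ℝ E]
    [Fintype ι] {s : Set E} (hs : s.Nonempty) {f : ι → E → ℝ} (hf : ∀ i, ConcaveOn ℝ s (f i))
    (hf₀ : ∀ i, ∀ x ∈ s, 0 ≤ f i x) :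
    ∃ x ∈ s, ∀ i, (∃ y ∈ s, 0 < f i y) → 0 < f i x := by
  obtain ⟨x₀, hx₀⟩ := hs
  rcases isEmpty_or_nonempty ι with hι | hι
  · exact ⟨x₀, hx₀, fun i => isEmptyElim i⟩
  have hp : ∀ i, ∃ p ∈ s, (∃ y ∈ s, 0 < f i y) → 0 < f i p := fun i =>
    (em (∃ y ∈ s, 0 < f i y)).elim (fun ⟨y, hy, hpos⟩ => ⟨y, hy, fun _ => hpos⟩)
      fun h => ⟨x₀, hx₀, fun h' => (h h').elim⟩
  choose p hps hpos using hp
  set w : ℝ := (Fintype.card ι : ℝ)⁻¹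
  have hw : 0 < w := by positivity
  have hw₁ : ∑ _i : ι, w = 1 := by simp [w]
  refine ⟨∑ i, w • p i, (hf (Classical.arbitrary ι)).1.sum_mem (fun _ _ => hw.le) hw₁
    (fun i _ => hps i), fun i hi => ?_⟩
  calc 0 < w • f i (p i) := smul_pos hw (hpos i hi)
    _ ≤ ∑ k, w • f i (p k) :=
      single_le_sum (fun k _ => smul_nonneg hw.le (hf₀ i _ (hps k))) (mem_univ i)
    _ ≤ f i (∑ k, w • p k) := (hf i).le_map_sum (fun _ _ => hw.le) hw₁ (fun k _ => hps k)

section Simplex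

variable {ι : Type*} [Fintype ι] {x w : ι → ℝ} {c : ℝ}

theorem dotProduct_le_of_mem_stdSimplex (hx : x ∈ stdSimplex ℝ ι) (hw : ∀ i, w i ≤ c) :
    x ⬝ᵥ w ≤ c :=
  calc x ⬝ᵥ w = ∑ i, x i * w i := rfl
    _ ≤ ∑ i, x i * c := sum_le_sum fun i _ => mul_le_mul_of_nonneg_left (hw i) (hx.1 i)
    _ = c := by rw [← sum_mul, hx.2, one_mul]

theorem le_dotProduct_of_mem_stdSimplex (hx : x ∈ stdSimplex ℝ ι) (hw : ∀ i, c ≤ w i) :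
    c ≤ x ⬝ᵥ w := by
  simpa using dotProduct_le_of_mem_stdSimplex (w := -w) hx fun i => neg_le_neg (hw i)

theorem inv_sum_smul_mem_stdSimplex (hx : 0 ≤ x) (hs : 0 < ∑ i, x i) :
    (∑ i, x i)⁻¹ • x ∈ stdSimplex ℝ ι :=
  ⟨fun i => smul_nonneg (inv_nonneg.2 hs.le) (hx i), by simp [← mul_sum, hs.ne']⟩

end Simplex

section MatrixGame

variable {n m : ℕ}

def minimaxStrategies (A : Matrix (Fin n) (Fin m) ℝ) (v : ℝ) : Set (Fin n → ℝ) :=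
  {x | x ∈ stdSimplex ℝ (Fin n) ∧ ∀ k, (Aᵀ *ᵥ x) k ≤ v}

def maximinStrategies (A : Matrix (Fin n) (Fin m) ℝ) (v : ℝ) : Set (Fin m → ℝ) :=
  {y | y ∈ stdSimplex ℝ (Fin m) ∧ ∀ j, v ≤ (A *ᵥ y) j}

variable {A : Matrix (Fin n) (Fin m) ℝ} {v : ℝ} {x : Fin n → ℝ} {y : Fin m → ℝ}

theorem maximinStrategies_eq_minimaxStrategies_neg_transpose :
    maximinStrategies A v = minimaxStrategies (-Aᵀ) (-v) := by
  ext y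
  simp [maximinStrategies, minimaxStrategies, neg_mulVec]

theorem minimaxStrategies_eq_maximinStrategies_neg_transpose :
    minimaxStrategies A v = maximinStrategies (-Aᵀ) (-v) := by
  ext x
  simp [maximinStrategies, minimaxStrategies, neg_mulVec]

theorem convex_minimaxStrategies : Convex ℝ (minimaxStrategies A v) := by
  intro x hx x' hx' a b ha hb hab
  refine ⟨convex_stdSimplex ℝ _ hx.1 hx'.1 ha hb hab, fun k => ?_⟩
  simp only [mulVec_add, mulVec_smul, Pi.add_apply, Pi.smul_apply, smul_eq_mul]
  calc a * (Aᵀ *ᵥ x) k + b * (Aᵀ *ᵥ x') k ≤ a * v + b * v :=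
      add_le_add (mul_le_mul_of_nonneg_left (hx.2 k) ha) (mul_le_mul_of_nonneg_left (hx'.2 k) hb)
    _ = v := by rw [← add_mul, hab, one_mul]

theorem exists_isNashPair (hn : 0 < n) (hm : 0 < m) (A : Matrix (Fin n) (Fin m) ℝ) :
    ∃ x y, IsNashPair A x y := by
  have hΔ : ∀ k, 0 < k → (stdSimplex ℝ (Fin k)).Nonempty := fun k hk =>
    ⟨_, single_mem_stdSimplex ℝ (⟨0, hk⟩ : Fin k)⟩
  obtain ⟨a, ha, b, hb, hab⟩ := (toLinearMap₂' ℝ A).exists_isSaddlePointOn (hΔ n hn)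
    (convex_stdSimplex ℝ _) (isCompact_stdSimplex ℝ _) (hΔ m hm) (convex_stdSimplex ℝ _)
    (isCompact_stdSimplex ℝ _)
  simp only [toLinearMap₂'_apply'] at hab
  exact ⟨a, b, ha, hb, fun x hx => hab x hx b hb, fun y hy => hab a ha y hy⟩

theorem IsNashPair.gameValue_eq (h : IsNashPair A x y) : gameValue A = x ⬝ᵥ A *ᵥ y := by
  obtain ⟨hx, hy, hx_min, hy_max⟩ := h
  have hsup : sSup ((fun y' => x ⬝ᵥ A *ᵥ y') '' stdSimplex ℝ (Fin m)) = x ⬝ᵥ A *ᵥ y :=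
    IsGreatest.csSup_eq ⟨⟨y, hy, rfl⟩, by rintro _ ⟨y', hy', rfl⟩; exact hy_max y' hy'⟩
  refine IsLeast.csInf_eq ⟨⟨x, hx, hsup⟩, ?_⟩
  rintro _ ⟨x', hx', rfl⟩
  have hbdd : BddAbove ((fun y' => x' ⬝ᵥ A *ᵥ y') '' stdSimplex ℝ (Fin m)) :=
    (isCompact_stdSimplex ℝ _).bddAbove_image (by fun_prop)
  exact (hx_min x' hx').trans (le_csSup hbdd ⟨y, hy, rfl⟩)

theorem IsNashPair.mem_minimaxStrategies (h : IsNashPair A x y) :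
    x ∈ minimaxStrategies A (gameValue A) := by
  refine ⟨h.1, fun k => ?_⟩
  have := h.2.2.2 (Pi.single k 1) (single_mem_stdSimplex ℝ k)
  rwa [dotProduct_mulVec, dotProduct_single, mul_one, ← mulVec_transpose, ← h.gameValue_eq]
    at this

theorem IsNashPair.mem_maximinStrategies (h : IsNashPair A x y) :
    y ∈ maximinStrategies A (gameValue A) := by
  refine ⟨h.2.1, fun j => ?_⟩
  have := h.2.2.1 (Pi.single j 1) (single_mem_stdSimplex ℝ j)
  rwa [single_dotProduct, one_mul, ← h.gameValue_eq] at this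

theorem isNashPair_of_mem (hx : x ∈ minimaxStrategies A v) (hy : y ∈ maximinStrategies A v) :
    IsNashPair A x y := by
  have hle : ∀ y' ∈ stdSimplex ℝ (Fin m), x ⬝ᵥ A *ᵥ y' ≤ v := fun y' hy' => by
    rw [dotProduct_mulVec, ← mulVec_transpose, dotProduct_comm]
    exact dotProduct_le_of_mem_stdSimplex hy' hx.2
  have hge : ∀ x' ∈ stdSimplex ℝ (Fin n), v ≤ x' ⬝ᵥ A *ᵥ y := fun x' hx' =>
    le_dotProduct_of_mem_stdSimplex hx' hy.2
  exact ⟨hx.1, hy.1, fun x' hx' => (hle y hy.1).trans (hge x' hx'),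
    fun y' hy' => (hle y' hy').trans (hge x hx.1)⟩

theorem exists_minimaxStrategies_pos_or_exists_maximinStrategies_lt
    (A : Matrix (Fin n) (Fin m) ℝ) (v : ℝ) (j : Fin n) :
    (∃ x ∈ minimaxStrategies A v, 0 < x j) ∨ ∃ y ∈ maximinStrategies A v, v < (A *ᵥ y) j := by
  -- Farkas' alternative for `A - v` and `b = eⱼ`, each side normalized onto the simplex
  set B : Matrix (Fin n) (Fin m) ℝ := A - of fun _ _ => v
  have hB : ∀ y i, (B *ᵥ y) i = (A *ᵥ y) i - v * ∑ k, y k := fun y i => by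
    simp [B, mulVec, dotProduct, mul_sum, sub_mul, sum_sub_distrib]
  have hBt : ∀ x k, (Bᵀ *ᵥ x) k = (Aᵀ *ᵥ x) k - v * ∑ i, x i := fun x k => by
    simp [B, mulVec, dotProduct, mul_sum, sub_mul, sum_sub_distrib]
  rcases B.exists_nonneg_le_mulVec_or_exists_nonneg_transpose_mulVec_nonpos (Pi.single j 1) with
    ⟨y, hy, hBy⟩ | ⟨x, hx, hBx, hxj⟩
  · right
    have hAy : ∀ i, v * ∑ k, y k + (Pi.single j 1 : Fin n → ℝ) i ≤ (A *ᵥ y) i := fun i => by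
      linarith [hBy i, hB y i]
    have hs : 0 < ∑ k, y k := by
      refine lt_of_le_of_ne (sum_nonneg fun k _ => hy k) fun hs => ?_
      have := hAy j
      norm_num [(Fintype.sum_eq_zero_iff_of_nonneg hy).1 hs.symm] at this
    refine ⟨_, ⟨inv_sum_smul_mem_stdSimplex hy hs, fun i => ?_⟩, ?_⟩
    · rw [mulVec_smul, Pi.smul_apply, smul_eq_mul, le_inv_mul_iff₀ hs]
      have : (0 : ℝ) ≤ (Pi.single j 1 : Fin n → ℝ) i := by by_cases h : i = j <;> simp [h]
      linarith [hAy i]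
    · rw [mulVec_smul, Pi.smul_apply, smul_eq_mul, lt_inv_mul_iff₀ hs]
      have := hAy j
      rw [Pi.single_eq_same] at this
      linarith
  · left
    rw [single_dotProduct, one_mul] at hxj
    have hs : 0 < ∑ i, x i := hxj.trans_le (single_le_sum (fun i _ => hx i) (mem_univ j))
    refine ⟨_, ⟨inv_sum_smul_mem_stdSimplex hx hs, fun k => ?_⟩, ?_⟩
    · rw [mulVec_smul, Pi.smul_apply, smul_eq_mul, inv_mul_le_iff₀ hs]
      linarith [hBt x k, show (Bᵀ *ᵥ x) k ≤ 0 from hBx k]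
    · simpa using mul_pos (inv_pos.2 hs) hxj

theorem exists_maximinStrategies_pos_or_exists_minimaxStrategies_lt
    (A : Matrix (Fin n) (Fin m) ℝ) (v : ℝ) (k : Fin m) :
    (∃ y ∈ maximinStrategies A v, 0 < y k) ∨ ∃ x ∈ minimaxStrategies A v, (Aᵀ *ᵥ x) k < v := by
  have := exists_minimaxStrategies_pos_or_exists_maximinStrategies_lt (-Aᵀ) (-v) k
  rw [← maximinStrategies_eq_minimaxStrategies_neg_transpose,
    ← minimaxStrategies_eq_maximinStrategies_neg_transpose] at this
  simpa [neg_mulVec] using this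

theorem exists_mem_minimaxStrategies_forall_strict (hne : (minimaxStrategies A v).Nonempty) :
    ∃ xs ∈ minimaxStrategies A v,
      (∀ j, (∃ x ∈ minimaxStrategies A v, 0 < x j) → 0 < xs j) ∧
      ∀ k, (∃ x ∈ minimaxStrategies A v, (Aᵀ *ᵥ x) k < v) → (Aᵀ *ᵥ xs) k < v := by
  have hconv := convex_minimaxStrategies (A := A) (v := v)
  let f : Fin n ⊕ Fin m → (Fin n → ℝ) → ℝ :=
    Sum.elim (fun j x => x j) (fun k x => v - (Aᵀ *ᵥ x) k)
  have hf : ∀ i, ConcaveOn ℝ (minimaxStrategies A v) (f i)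
    | .inl j => (LinearMap.proj j).concaveOn hconv
    | .inr k => (concaveOn_const v hconv).sub ((LinearMap.proj k ∘ₗ Aᵀ.mulVecLin).convexOn hconv)
  have hf₀ : ∀ i, ∀ x ∈ minimaxStrategies A v, 0 ≤ f i x
    | .inl j, _, hx => hx.1.1 j
    | .inr k, _, hx => sub_nonneg.2 (hx.2 k)
  obtain ⟨xs, hxs, hpos⟩ := exists_mem_forall_pos_of_concaveOn hne hf hf₀
  refine ⟨xs, hxs, fun j hj => hpos (.inl j) hj, fun k ⟨x, hx, hk⟩ => ?_⟩
  exact sub_pos.1 (hpos (.inr k) ⟨x, hx, sub_pos.2 hk⟩)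

theorem exists_mem_maximinStrategies_forall_strict (hne : (maximinStrategies A v).Nonempty) :
    ∃ ys ∈ maximinStrategies A v,
      (∀ k, (∃ y ∈ maximinStrategies A v, 0 < y k) → 0 < ys k) ∧
      ∀ j, (∃ y ∈ maximinStrategies A v, v < (A *ᵥ y) j) → v < (A *ᵥ ys) j := by
  rw [maximinStrategies_eq_minimaxStrategies_neg_transpose] at hne ⊢
  simpa [neg_mulVec] using exists_mem_minimaxStrategies_forall_strict hne

end MatrixGame

/-- There is a Nash equilibrium in which each player plays every one of their essential
pure strategies with positive probability, and whose off-support payoffs are strictly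
separated from the value of the game. -/
theorem exists_nash_with_all_essential_strategies
    (n m : ℕ) (hn : 0 < n) (hm : 0 < m) (A : Matrix (Fin n) (Fin m) ℝ) :
    ∃ xs : Fin n → ℝ, ∃ ys : Fin m → ℝ, IsNashPair A xs ys ∧
      (∀ j : Fin n, (∃ x y, IsNashPair A x y ∧ 0 < x j) → 0 < xs j) ∧
      (∀ k : Fin m, (∃ x y, IsNashPair A x y ∧ 0 < y k) → 0 < ys k) ∧
      (∀ j : Fin n, xs j = 0 → gameValue A < A.mulVec ys j) ∧
      (∀ k : Fin m, ys k = 0 → A.transpose.mulVec xs k < gameValue A) := by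
  obtain ⟨x₀, y₀, h₀⟩ := exists_isNashPair hn hm A
  obtain ⟨xs, hxs, hxs_pos, hxs_lt⟩ :=
    exists_mem_minimaxStrategies_forall_strict ⟨x₀, h₀.mem_minimaxStrategies⟩
  obtain ⟨ys, hys, hys_pos, hys_lt⟩ :=
    exists_mem_maximinStrategies_forall_strict ⟨y₀, h₀.mem_maximinStrategies⟩
  refine ⟨xs, ys, isNashPair_of_mem hxs hys, ?_, ?_, ?_, ?_⟩
  · rintro j ⟨x, y, h, hxj⟩
    exact hxs_pos j ⟨x, h.mem_minimaxStrategies, hxj⟩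
  · rintro k ⟨x, y, h, hyk⟩
    exact hys_pos k ⟨y, h.mem_maximinStrategies, hyk⟩
  · intro j hj
    exact hys_lt j <| (exists_minimaxStrategies_pos_or_exists_maximinStrategies_lt A _ j)
      |>.resolve_left fun hpos => (hxs_pos j hpos).ne' hj
  · intro k hk
    exact hxs_lt k <| (exists_maximinStrategies_pos_or_exists_minimaxStrategies_lt A _ k)
      |>.resolve_left fun hpos => (hys_pos k hpos).ne' hk
end
end

section
/- Let A ∈ ℝ^{n×m} with all entries in [−1, 1], and let (x*, y*) be a Nash equilibrium of the associated matrix game with v = x*ᵀAy*. Suppose ε ∈ (0, 1] satisfies (A y*)_j ≥ v + ε for every j ∉ supp(x*) and (Aᵀ x*)_k ≤ v − ε for every k ∉ supp(y*). Let (x̃, ỹ) ∈ Δ_n × Δ_m be such that for every x ∈ Δ_n with supp(x) ⊆ supp(x*) and every y ∈ Δ_m with supp(y) ⊆ supp(y*): (x − x̃)ᵀ A ỹ + x̃ᵀ A (ỹ − y) ≥ 0. Then the pair ((1 − ε/2)·x* + (ε/2)·x̃, (1 − ε/2)·y* + (ε/2)·ỹ) is also a Nash equilibrium of the matrix game. 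-/
open Matrix Filter Finset Topology

noncomputable section

/-- If every coordinate of `w` is at most `c`, then `x ⬝ᵥ w ≤ c` for `x` in the simplex. -/
lemma dot_le_of_forall_le {n : ℕ} {x w : Fin n → ℝ} (hx : x ∈ stdSimplex ℝ (Fin n))
    {c : ℝ} (h : ∀ j, w j ≤ c) : x ⬝ᵥ w ≤ c := by
  calc x ⬝ᵥ w = ∑ j, x j * w j := rfl
    _ ≤ ∑ j, x j * c :=
      Finset.sum_le_sum (fun j _ => mul_le_mul_of_nonneg_left (h j) (hx.1 j))
    _ = c := by rw [← Finset.sum_mul, hx.2, one_mul]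

/-- If every coordinate of `w` is at least `c`, then `c ≤ x ⬝ᵥ w` for `x` in the simplex. -/
lemma le_dot_of_forall_le {n : ℕ} {x w : Fin n → ℝ} (hx : x ∈ stdSimplex ℝ (Fin n))
    {c : ℝ} (h : ∀ j, c ≤ w j) : c ≤ x ⬝ᵥ w := by
  calc c = ∑ j, x j * c := by rw [← Finset.sum_mul, hx.2, one_mul]
    _ ≤ ∑ j, x j * w j :=
      Finset.sum_le_sum (fun j _ => mul_le_mul_of_nonneg_left (h j) (hx.1 j))
    _ = x ⬝ᵥ w := rfl

/-- Complementarity: if `c ≤ w j` for all `j` and `x ⬝ᵥ w = c` for a simplex point `x`,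
then each term `x j * (w j - c)` is zero. -/
lemma compl_slack {n : ℕ} {x w : Fin n → ℝ} (hx : x ∈ stdSimplex ℝ (Fin n))
    {c : ℝ} (h : ∀ j, c ≤ w j) (he : x ⬝ᵥ w = c) : ∀ j, x j * (w j - c) = 0 := by
  have hs : ∑ j, x j * (w j - c) = 0 := by
    have : ∑ j, x j * (w j - c) = x ⬝ᵥ w - (∑ j, x j) * c := by
      simp [dotProduct, mul_sub, Finset.sum_sub_distrib, Finset.sum_mul]
    rw [this, he, hx.2, one_mul, sub_self]
  intro j
  exact (Finset.sum_eq_zero_iff_of_nonneg (fun j _ =>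
    mul_nonneg (hx.1 j) (sub_nonneg.2 (h j)))).1 hs j (Finset.mem_univ j)

/-- Coordinates of `A.mulVec y` are in `[-1, 1]` when entries of `A` are and `y` is in
the simplex. -/
lemma mulVec_mem_Icc {n m : ℕ} {A : Matrix (Fin n) (Fin m) ℝ}
    (hA : ∀ j k, A j k ∈ Set.Icc (-1 : ℝ) 1) {y : Fin m → ℝ}
    (hy : y ∈ stdSimplex ℝ (Fin m)) (j : Fin n) : A.mulVec y j ∈ Set.Icc (-1 : ℝ) 1 := by
  constructor
  · calc (-1 : ℝ) = ∑ k, y k * (-1) := by rw [← Finset.sum_mul, hy.2, one_mul]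
      _ ≤ ∑ k, y k * A j k :=
        Finset.sum_le_sum (fun k _ => mul_le_mul_of_nonneg_left (hA j k).1 (hy.1 k))
      _ = A.mulVec y j := by simp [Matrix.mulVec, dotProduct, mul_comm]
  · calc A.mulVec y j = ∑ k, y k * A j k := by simp [Matrix.mulVec, dotProduct, mul_comm]
      _ ≤ ∑ k, y k * 1 :=
        Finset.sum_le_sum (fun k _ => mul_le_mul_of_nonneg_left (hA j k).2 (hy.1 k))
      _ = 1 := by rw [← Finset.sum_mul, hy.2, one_mul]

/-- Coordinates of `A.vecMul x` are in `[-1, 1]`. -/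
lemma vecMul_mem_Icc {n m : ℕ} {A : Matrix (Fin n) (Fin m) ℝ}
    (hA : ∀ j k, A j k ∈ Set.Icc (-1 : ℝ) 1) {x : Fin n → ℝ}
    (hx : x ∈ stdSimplex ℝ (Fin n)) (k : Fin m) : A.vecMul x k ∈ Set.Icc (-1 : ℝ) 1 := by
  have : A.vecMul x k = Aᵀ.mulVec x k := by rw [Matrix.mulVec_transpose]
  rw [this]
  exact mulVec_mem_Icc (fun k j => hA j k) hx k

/-- Lemma (mixing towards a support-optimal pair stays Nash): if `(x̃, ỹ)` is optimal
against all strategies supported in the supports of the Nash equilibrium `(x*, y*)`, then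
mixing `(x*, y*)` with `(x̃, ỹ)` with weight `ε/2` yields another Nash equilibrium. -/
theorem mixture_is_nash
    (n m : ℕ) (A : Matrix (Fin n) (Fin m) ℝ)
    (hA : ∀ j k, A j k ∈ Set.Icc (-1 : ℝ) 1)
    (xs : Fin n → ℝ) (ys : Fin m → ℝ) (hnash : IsNashPair A xs ys)
    (v : ℝ) (hv : v = xs ⬝ᵥ A.mulVec ys)
    (ε : ℝ) (hε : ε ∈ Set.Ioc (0 : ℝ) 1)
    (hrow : ∀ j : Fin n, xs j = 0 → v + ε ≤ A.mulVec ys j)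
    (hcol : ∀ k : Fin m, ys k = 0 → A.transpose.mulVec xs k ≤ v - ε)
    (xt : Fin n → ℝ) (yt : Fin m → ℝ)
    (hxt : xt ∈ stdSimplex ℝ (Fin n)) (hyt : yt ∈ stdSimplex ℝ (Fin m))
    (hopt : ∀ x ∈ stdSimplex ℝ (Fin n), (∀ j, xs j = 0 → x j = 0) →
      ∀ y ∈ stdSimplex ℝ (Fin m), (∀ k, ys k = 0 → y k = 0) →
        0 ≤ (x - xt) ⬝ᵥ A.mulVec yt + xt ⬝ᵥ A.mulVec (yt - y)) :
    IsNashPair A ((1 - ε / 2) • xs + (ε / 2) • xt) ((1 - ε / 2) • ys + (ε / 2) • yt) := by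
  obtain ⟨hxs, hys, hN1, hN2⟩ := hnash
  obtain ⟨hε0, hε1⟩ := hε
  set lam := ε / 2 with hlam
  have hlam0 : 0 < lam := by positivity
  have hlam1 : lam ≤ 1 / 2 := by rw [hlam]; linarith
  -- the simplified variational inequality
  have hVI : ∀ x ∈ stdSimplex ℝ (Fin n), (∀ j, xs j = 0 → x j = 0) →
      ∀ y ∈ stdSimplex ℝ (Fin m), (∀ k, ys k = 0 → y k = 0) →
        xt ⬝ᵥ A.mulVec y ≤ x ⬝ᵥ A.mulVec yt := by
    intro x hx hxsupp y hy hysupp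
    have := hopt x hx hxsupp y hy hysupp
    have e1 : (x - xt) ⬝ᵥ A.mulVec yt = x ⬝ᵥ A.mulVec yt - xt ⬝ᵥ A.mulVec yt := by
      rw [sub_dotProduct]
    have e2 : xt ⬝ᵥ A.mulVec (yt - y) = xt ⬝ᵥ A.mulVec yt - xt ⬝ᵥ A.mulVec y := by
      rw [Matrix.mulVec_sub, dotProduct_sub]
    linarith [this, e1.symm, e2.symm]
  have hxs_supp : ∀ j, xs j = 0 → xs j = 0 := fun j h => h
  have hys_supp : ∀ k, ys k = 0 → ys k = 0 := fun k h => h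
  -- basic Nash consequences
  have hrow_ge : ∀ j, v ≤ A.mulVec ys j := by
    intro j
    have := hN1 (Pi.single j 1) (single_mem_stdSimplex ℝ j)
    rw [← hv] at this
    calc v ≤ Pi.single j 1 ⬝ᵥ A.mulVec ys := this
      _ = A.mulVec ys j := by simp [single_dotProduct]
  have hcol_le : ∀ k, A.vecMul xs k ≤ v := by
    intro k
    have := hN2 (Pi.single k 1) (single_mem_stdSimplex ℝ k)
    rw [← hv] at this
    calc A.vecMul xs k = xs ⬝ᵥ A.mulVec (Pi.single k 1) := by
          rw [Matrix.dotProduct_mulVec]; simp [dotProduct_single]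
      _ ≤ v := this
  -- value of xs against A ys as a dot with vecMul
  have hv' : ys ⬝ᵥ A.vecMul xs = v := by
    rw [hv, Matrix.dotProduct_mulVec, dotProduct_comm]
  -- step C : xt ⬝ A ys = v and xs ⬝ A yt = v
  have hC1 : v ≤ xt ⬝ᵥ A.mulVec ys := by rw [hv]; exact hN1 xt hxt
  have hC2 : xs ⬝ᵥ A.mulVec yt ≤ v := by rw [hv]; exact hN2 yt hyt
  have hC0 : xt ⬝ᵥ A.mulVec ys ≤ xs ⬝ᵥ A.mulVec yt := hVI xs hxs hxs_supp ys hys hys_supp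
  have hxtAys : xt ⬝ᵥ A.mulVec ys = v := le_antisymm (le_trans hC0 hC2) hC1
  have hxsAyt : xs ⬝ᵥ A.mulVec yt = v := le_antisymm hC2 (le_trans hC1 hC0)
  -- step D : supports are contained
  have hxt_supp : ∀ j, xs j = 0 → xt j = 0 := by
    intro j hj
    have hsl := compl_slack hxt hrow_ge hxtAys j
    have : v + ε ≤ A.mulVec ys j := hrow j hj
    rcases mul_eq_zero.1 hsl with h | h
    · exact h
    · exfalso; have := sub_eq_zero.1 h; linarith
  have hyt_supp : ∀ k, ys k = 0 → yt k = 0 := by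
    intro k hk
    have hytv : yt ⬝ᵥ (fun k => v - A.vecMul xs k) = 0 := by
      have : yt ⬝ᵥ (fun k => v - A.vecMul xs k)
          = (∑ k, yt k) * v - yt ⬝ᵥ A.vecMul xs := by
        simp [dotProduct, mul_sub, Finset.sum_sub_distrib, Finset.sum_mul, mul_comm,
          Finset.mul_sum]
      rw [this, hyt.2, one_mul]
      have : yt ⬝ᵥ A.vecMul xs = xs ⬝ᵥ A.mulVec yt := by
        rw [Matrix.dotProduct_mulVec, dotProduct_comm]
      rw [this, hxsAyt]; ring
    have hsl := compl_slack hyt (fun k => sub_nonneg.2 (hcol_le k) : ∀ k,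
        (0:ℝ) ≤ v - A.vecMul xs k) (by simpa using hytv) k
    have hck : A.vecMul xs k ≤ v - ε := by
      have := hcol k hk; rwa [Matrix.mulVec_transpose] at this
    rcases mul_eq_zero.1 hsl with h | h
    · exact h
    · exfalso; simp only [sub_zero] at h; linarith [sub_eq_zero.1 h]
  -- step E : xt ⬝ A yt = v
  have hE1 : xt ⬝ᵥ A.mulVec yt ≤ xs ⬝ᵥ A.mulVec yt := hVI xs hxs hxs_supp yt hyt hyt_supp
  have hE2 : xt ⬝ᵥ A.mulVec ys ≤ xt ⬝ᵥ A.mulVec yt := hVI xt hxt hxt_supp ys hys hys_supp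
  have hxtAyt : xt ⬝ᵥ A.mulVec yt = v := by
    apply le_antisymm
    · rw [← hxsAyt]; exact hE1
    · rw [← hxtAys]; exact hE2
  -- abbreviations for the mixtures
  set xh : Fin n → ℝ := (1 - lam) • xs + lam • xt with hxh
  set yh : Fin m → ℝ := (1 - lam) • ys + lam • yt with hyh
  have hxh_mem : xh ∈ stdSimplex ℝ (Fin n) := by
    constructor
    · intro j
      simp only [hxh, Pi.add_apply, Pi.smul_apply, smul_eq_mul]
      have := hxs.1 j; have := hxt.1 j; nlinarith
    · have := hxs.2; have := hxt.2
      simp only [hxh, Pi.add_apply, Pi.smul_apply, smul_eq_mul]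
      rw [Finset.sum_add_distrib, ← Finset.mul_sum, ← Finset.mul_sum, hxs.2, hxt.2]; ring
  have hyh_mem : yh ∈ stdSimplex ℝ (Fin m) := by
    constructor
    · intro k
      simp only [hyh, Pi.add_apply, Pi.smul_apply, smul_eq_mul]
      have := hys.1 k; have := hyt.1 k; nlinarith
    · simp only [hyh, Pi.add_apply, Pi.smul_apply, smul_eq_mul]
      rw [Finset.sum_add_distrib, ← Finset.mul_sum, ← Finset.mul_sum, hys.2, hyt.2]; ring
  -- expansion lemmas
  have hmulVec_yh : A.mulVec yh = (1 - lam) • A.mulVec ys + lam • A.mulVec yt := by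
    rw [hyh, Matrix.mulVec_add, Matrix.mulVec_smul, Matrix.mulVec_smul]
  have hdot_xh : ∀ w : Fin n → ℝ, xh ⬝ᵥ w = (1 - lam) * (xs ⬝ᵥ w) + lam * (xt ⬝ᵥ w) := by
    intro w
    rw [hxh, add_dotProduct, smul_dotProduct, smul_dotProduct]
    simp [smul_eq_mul]
  have hdot_yh : ∀ x : Fin n → ℝ, x ⬝ᵥ A.mulVec yh
      = (1 - lam) * (x ⬝ᵥ A.mulVec ys) + lam * (x ⬝ᵥ A.mulVec yt) := by
    intro x
    rw [hmulVec_yh, dotProduct_add, dotProduct_smul, dotProduct_smul]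
    simp [smul_eq_mul]
  -- the value of the mixed pair
  have hval : xh ⬝ᵥ A.mulVec yh = v := by
    rw [hdot_xh, hdot_yh, hdot_yh, ← hv, hxsAyt, hxtAys, hxtAyt]; ring
  -- G1 : every coordinate of A.mulVec yh is at least v
  have hG1 : ∀ j, v ≤ A.mulVec yh j := by
    intro j
    have hcalc : A.mulVec yh j = (1 - lam) * A.mulVec ys j + lam * A.mulVec yt j := by
      rw [hmulVec_yh]; simp [smul_eq_mul]
    rw [hcalc]
    rcases eq_or_lt_of_le (hxs.1 j) with hj | hj
    · -- xs j = 0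
      have h1 : v + ε ≤ A.mulVec ys j := hrow j hj.symm
      have h2 : A.mulVec ys j ≤ 1 := (mulVec_mem_Icc hA hys j).2
      have h3 : -1 ≤ A.mulVec yt j := (mulVec_mem_Icc hA hyt j).1
      have hvle : v ≤ 1 - ε := by linarith
      nlinarith
    · -- xs j > 0 : A ys j = v, and A yt j ≥ v
      have h1 : A.mulVec ys j = v := by
        have hsl := compl_slack hxs hrow_ge (show xs ⬝ᵥ A.mulVec ys = v from hv.symm) j
        rcases mul_eq_zero.1 hsl with h | h
        · exact absurd h (ne_of_gt hj)
        · linarith [sub_eq_zero.1 h]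
      have hsingle_supp : ∀ j', xs j' = 0 → (Pi.single j 1 : Fin n → ℝ) j' = 0 := by
        intro j' hj'
        have : j' ≠ j := fun h => by rw [h] at hj'; exact absurd hj' (ne_of_gt hj)
        simp [Pi.single_apply, this]
      have h2 : xt ⬝ᵥ A.mulVec ys ≤ Pi.single j (1:ℝ) ⬝ᵥ A.mulVec yt :=
        hVI (Pi.single j 1) (single_mem_stdSimplex ℝ j) hsingle_supp ys hys hys_supp
      have h3 : v ≤ A.mulVec yt j := by
        rw [hxtAys] at h2
        calc v ≤ Pi.single j (1:ℝ) ⬝ᵥ A.mulVec yt := h2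
          _ = A.mulVec yt j := by simp [single_dotProduct]
      nlinarith
  -- G2 : every coordinate of A.vecMul xh is at most v
  have hG2 : ∀ k, A.vecMul xh k ≤ v := by
    intro k
    have hcalc : A.vecMul xh k = (1 - lam) * A.vecMul xs k + lam * A.vecMul xt k := by
      rw [hxh, Matrix.add_vecMul, Matrix.smul_vecMul, Matrix.smul_vecMul]
      simp [smul_eq_mul]
    rw [hcalc]
    rcases eq_or_lt_of_le (hys.1 k) with hk | hk
    · -- ys k = 0
      have h1 : A.vecMul xs k ≤ v - ε := by
        have := hcol k hk.symm; rwa [Matrix.mulVec_transpose] at this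
      have h2 : -1 ≤ A.vecMul xs k := (vecMul_mem_Icc hA hxs k).1
      have h3 : A.vecMul xt k ≤ 1 := (vecMul_mem_Icc hA hxt k).2
      have hvge : -1 + ε ≤ v := by linarith
      nlinarith
    · -- ys k > 0 : vecMul xs k = v, and vecMul xt k ≤ v
      have h1 : A.vecMul xs k = v := by
        have hdz : ys ⬝ᵥ (fun k => v - A.vecMul xs k) = 0 := by
          have : ys ⬝ᵥ (fun k => v - A.vecMul xs k)
              = (∑ k, ys k) * v - ys ⬝ᵥ A.vecMul xs := by
            simp [dotProduct, mul_sub, Finset.sum_sub_distrib, Finset.sum_mul, mul_comm,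
              Finset.mul_sum]
          rw [this, hys.2, one_mul, hv']; ring
        have hsl := compl_slack hys (fun k => sub_nonneg.2 (hcol_le k) : ∀ k,
            (0:ℝ) ≤ v - A.vecMul xs k) hdz k
        rcases mul_eq_zero.1 hsl with h | h
        · exact absurd h (ne_of_gt hk)
        · simp only [sub_zero] at h; linarith [sub_eq_zero.1 h]
      have hsingle_supp : ∀ k', ys k' = 0 → (Pi.single k 1 : Fin m → ℝ) k' = 0 := by
        intro k' hk'
        have : k' ≠ k := fun h => by rw [h] at hk'; exact absurd hk' (ne_of_gt hk)
        simp [Pi.single_apply, this]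
      have h2 : xt ⬝ᵥ A.mulVec (Pi.single k 1) ≤ xs ⬝ᵥ A.mulVec yt :=
        hVI xs hxs hxs_supp (Pi.single k 1) (single_mem_stdSimplex ℝ k) hsingle_supp
      have h3 : A.vecMul xt k ≤ v := by
        rw [hxsAyt] at h2
        calc A.vecMul xt k = xt ⬝ᵥ A.mulVec (Pi.single k 1) := by
              rw [Matrix.dotProduct_mulVec]; simp [dotProduct_single]
          _ ≤ v := h2
      nlinarith
  -- assemble
  refine ⟨hxh_mem, hyh_mem, ?_, ?_⟩
  · intro x' hx'
    rw [hval]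
    exact le_dot_of_forall_le hx' hG1
  · intro y' hy'
    rw [hval]
    calc xh ⬝ᵥ A.mulVec y' = y' ⬝ᵥ A.vecMul xh := by
          rw [Matrix.dotProduct_mulVec, dotProduct_comm]
    _ ≤ v := dot_le_of_forall_le hy' hG2
end
end

section
/- Let T ≥ 1 and let a_1, …, a_T be real numbers such that Σ_{s=1}^{t} a_s > 0 for every t ∈ {1,…,T}. Then Σ_{t=1}^{T} a_t / √(Σ_{s=1}^{t} a_s) ≤ 2 · √(Σ_{t=1}^{T} a_t). -/
open Finset

lemma key_step (x y : ℝ) (hx : 0 < x) (hy : 0 ≤ y) :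
    (x - y) / Real.sqrt x ≤ 2 * Real.sqrt x - 2 * Real.sqrt y := by
  rw [div_le_iff₀ (Real.sqrt_pos.2 hx)]
  have h2 : 2 * Real.sqrt y * Real.sqrt x ≤ y + x := by
    have := two_mul_le_add_sq (Real.sqrt y) (Real.sqrt x)
    rwa [Real.sq_sqrt hy, Real.sq_sqrt hx.le] at this
  have hxx : Real.sqrt x * Real.sqrt x = x := Real.mul_self_sqrt hx.le
  nlinarith

/-- Lemma (adaptive step-size bound): if all partial sums of `a` are positive, then
`∑_{t=1}^{T} a_t / √(∑_{s=1}^{t} a_s) ≤ 2 √(∑_{t=1}^{T} a_t)`. -/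
theorem sum_div_sqrt_partial_sums_le
    (T : ℕ) (hT : 1 ≤ T) (a : ℕ → ℝ)
    (hpos : ∀ t ∈ Finset.Icc 1 T, 0 < ∑ s ∈ Finset.Icc 1 t, a s) :
    ∑ t ∈ Finset.Icc 1 T, a t / Real.sqrt (∑ s ∈ Finset.Icc 1 t, a s)
      ≤ 2 * Real.sqrt (∑ t ∈ Finset.Icc 1 T, a t) := by
  induction T, hT using Nat.le_induction with
  | base =>
      simp only [Finset.Icc_self, Finset.sum_singleton]
      have h1 : 0 < a 1 := by
        have := hpos 1 (by simp)
        simpa using this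
      rw [div_le_iff₀ (Real.sqrt_pos.2 h1)]
      nlinarith [Real.mul_self_sqrt h1.le, Real.sqrt_pos.2 h1]
  | succ n hn ih =>
      have hmem : ∀ t, t ∈ Finset.Icc 1 n → t ∈ Finset.Icc 1 (n+1) := by
        intro t ht
        simp only [Finset.mem_Icc] at ht ⊢
        omega
      have hsplit : Finset.Icc 1 (n+1) = insert (n+1) (Finset.Icc 1 n) := by
        ext x; simp only [Finset.mem_Icc, Finset.mem_insert]; omega
      have hnot : (n+1) ∉ Finset.Icc 1 n := by simp
      have hSn : 0 < ∑ s ∈ Finset.Icc 1 n, a s := hpos n (by simp; omega)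
      have hSn1 : 0 < ∑ s ∈ Finset.Icc 1 (n+1), a s := hpos (n+1) (by simp)
      have ih' := ih (fun t ht => hpos t (hmem t ht))
      rw [hsplit, Finset.sum_insert hnot, Finset.sum_insert hnot]
      have han1 : a (n+1) = (∑ s ∈ Finset.Icc 1 (n+1), a s) - ∑ s ∈ Finset.Icc 1 n, a s := by
        rw [hsplit, Finset.sum_insert hnot]; ring
      have hkey := key_step (∑ s ∈ Finset.Icc 1 (n+1), a s) (∑ s ∈ Finset.Icc 1 n, a s)
        hSn1 hSn.le
      rw [← han1] at hkey
      rw [← Finset.sum_insert hnot, ← hsplit]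
      calc a (n+1) / Real.sqrt (∑ s ∈ Finset.Icc 1 (n+1), a s)
            + ∑ t ∈ Finset.Icc 1 n, a t / Real.sqrt (∑ s ∈ Finset.Icc 1 t, a s)
          ≤ (2 * Real.sqrt (∑ s ∈ Finset.Icc 1 (n+1), a s)
              - 2 * Real.sqrt (∑ s ∈ Finset.Icc 1 n, a s))
            + 2 * Real.sqrt (∑ t ∈ Finset.Icc 1 n, a t) := by
            exact add_le_add hkey ih'
        _ = 2 * Real.sqrt (∑ s ∈ Finset.Icc 1 (n+1), a s) := by ring
end
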